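/- arXiv:2309.01001 — 4 statements merged into one kernel-verified Lean document; each statement's English description precedes it below -/
import Mathlib

section
/- Let G be a finite connected simple graph that is outer 1-planar and not chordal (i.e., G contains an induced cycle of length at least four). Then the cop number of G is at least 2; that is, a single cop cannot catch the robber on G. -/
/-!
An outer 1-planar graph contains no wheel whose rim has length at least four: seen from the
hub, the rim vertex closest to it in the cyclic order and the second closest one force some
edge to be crossed twice. In a wheel-free graph, deleting a vertex dominated by another one
keeps an induced cycle of length at least four, since the dominator shortcuts the cycle past
the deleted vertex. Dismantling the graph therefore ends in a retract without dominated
vertices that still carries an induced cycle. On it the robber evades the image of the cop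
under the retraction, hence the cop itself.
-/

/-- A (memoryless, full-information) strategy for `k` cops on the graph `G`:
initial positions, and a move function giving the cops' next positions from the
current cop positions and robber position; each cop stays put or moves along an edge. -/
structure CopStrategy {V : Type*} (G : SimpleGraph V) (k : ℕ) where
  init : Fin k → V
  move : (Fin k → V) → V → (Fin k → V)
  valid : ∀ c r i, move c r i = c i ∨ G.Adj (c i) (move c r i)

/-- A strategy for the robber: an initial vertex chosen after seeing the cops'
initial positions, and a move function from the current positions; the robber
stays put or moves along an edge. -/
structure RobberStrategy {V : Type*} (G : SimpleGraph V) (k : ℕ) where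
  init : (Fin k → V) → V
  move : (Fin k → V) → V → V
  valid : ∀ c r, move c r = r ∨ G.Adj r (move c r)

/-- The play determined by a cop strategy and a robber strategy: at time `t`,
`(gamePlay CS RS t).1` are the cop positions and `(gamePlay CS RS t).2` is the
robber position, after both sides have moved in round `t` (cops move first). -/
def gamePlay {V : Type*} {G : SimpleGraph V} {k : ℕ} (CS : CopStrategy G k)
    (RS : RobberStrategy G k) : ℕ → (Fin k → V) × V
  | 0 => (CS.init, RS.init CS.init)
  | t + 1 =>
      let s := gamePlay CS RS t
      let c' := CS.move s.1 s.2
      (c', RS.move c' s.2)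

/-- A cop strategy is winning if against every robber strategy, at some moment some cop
occupies the robber's vertex (either right after the cops' move, while the robber is
still on its previous vertex, or after the robber's move). -/
def CopStrategy.Winning {V : Type*} {G : SimpleGraph V} {k : ℕ}
    (CS : CopStrategy G k) : Prop :=
  ∀ RS : RobberStrategy G k, ∃ t : ℕ,
    (∃ i, (gamePlay CS RS t).1 i = (gamePlay CS RS t).2) ∨
    (∃ i, CS.move (gamePlay CS RS t).1 (gamePlay CS RS t).2 i = (gamePlay CS RS t).2)

/-- The cop number of `G`: the least `k` such that `k` cops have a winning strategy. -/
noncomputable def copNumber {V : Type*} (G : SimpleGraph V) : ℕ :=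
  sInf {k | ∃ CS : CopStrategy G k, CS.Winning}

/-- The set of vertices of `ZMod n` strictly between `a` and `b`, traversing the circle
from `a` to `b` in the increasing direction of the cyclic order. -/
def arcBetween {n : ℕ} (a b : ZMod n) : Set (ZMod n) :=
  {x | 0 < (x - a).val ∧ (x - a).val < (b - a).val}

/-- Edges `{a,b}` and `{c,d}` with four distinct endpoints cross if exactly one of
`c`, `d` lies strictly between `a` and `b` on one of the two arcs. -/
def EdgesCross {n : ℕ} (a b c d : ZMod n) : Prop :=
  a ≠ b ∧ a ≠ c ∧ a ≠ d ∧ b ≠ c ∧ b ≠ d ∧ c ≠ d ∧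
  (Xor' (c ∈ arcBetween a b) (d ∈ arcBetween a b) ∨
   Xor' (c ∈ arcBetween b a) (d ∈ arcBetween b a))

/-- Crossing of (unordered) edges, as elements of `Sym2 (ZMod n)`. -/
def Sym2Cross {n : ℕ} (e f : Sym2 (ZMod n)) : Prop :=
  ∃ a b c d : ZMod n, e = s(a, b) ∧ f = s(c, d) ∧ EdgesCross a b c d

/-- The natural cyclic ordering of `ZMod n` is an outer `k`-planar drawing of `G`
if every edge of `G` crosses at most `k` other edges of `G`. -/
def OuterKPlanarDrawing {n : ℕ} (G : SimpleGraph (ZMod n)) (k : ℕ) : Prop :=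
  ∀ e ∈ G.edgeSet, {e' | e' ∈ G.edgeSet ∧ Sym2Cross e e'}.ncard ≤ k

/-- A finite simple graph is outer `k`-planar if there is a bijection of its vertex set
with `ZMod n` (where `n` is the number of vertices) under which every edge crosses
at most `k` other edges. -/
def OuterKPlanar {V : Type*} [Fintype V] (G : SimpleGraph V) (k : ℕ) : Prop :=
  ∃ f : V ≃ ZMod (Fintype.card V),
    OuterKPlanarDrawing (G.map f.toEmbedding) k

/-- A graph is chordal if it contains no induced cycle of length at least four. -/
def IsChordal {V : Type*} (G : SimpleGraph V) : Prop :=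
  ∀ (U : Set V) (m : ℕ), 4 ≤ m → IsEmpty (G.induce U ≃g SimpleGraph.cycleGraph m)

open Relation

section Circle
variable {n : ℕ}

lemma mem_arcBetween_sub_iff (p a b x : ZMod n) :
    x - p ∈ arcBetween (a - p) (b - p) ↔ x ∈ arcBetween a b := by
  simp only [arcBetween, Set.mem_ofPred_eq, sub_sub_sub_cancel_right]

lemma edgesCross_sub_iff (p a b c d : ZMod n) :
    EdgesCross (a - p) (b - p) (c - p) (d - p) ↔ EdgesCross a b c d := by
  simp only [EdgesCross, mem_arcBetween_sub_iff, ne_eq, sub_left_inj]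

lemma EdgesCross.swap_right {a b c d : ZMod n} (h : EdgesCross a b c d) :
    EdgesCross a b d c := by
  obtain ⟨hab, hac, had, hbc, hbd, hcd, hx⟩ := h
  exact ⟨hab, had, hac, hbd, hbc, hcd.symm, hx.imp Or.symm Or.symm⟩

variable [NeZero n]

lemma ZMod.val_sub_of_lt {a x : ZMod n} (h : x.val < a.val) :
    (x - a).val = n - (a.val - x.val) := by
  have hne : a - x ≠ 0 := sub_ne_zero.2 (ne_of_apply_ne ZMod.val h.ne')
  rw [← neg_sub, ZMod.neg_val, if_neg hne, ZMod.val_sub h.le]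

lemma edgesCross_of_val_lt {a b c d : ZMod n} (hac : a.val < c.val) (hcb : c.val < b.val)
    (hd : d.val < a.val ∨ b.val < d.val) : EdgesCross a b c d := by
  have hb := b.val_lt
  have hc : c ∈ arcBetween a b := by
    simp only [arcBetween, Set.mem_ofPred_eq, ZMod.val_sub hac.le,
      ZMod.val_sub (hac.trans hcb).le]
    omega
  have hd' : d ∉ arcBetween a b := by
    simp only [arcBetween, Set.mem_ofPred_eq, ZMod.val_sub (hac.trans hcb).le, not_and, not_lt]
    rcases hd with hd | hd
    · rw [ZMod.val_sub_of_lt hd]; omega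
    · rw [ZMod.val_sub (by omega)]; omega
  refine ⟨ne_of_apply_ne ZMod.val (by omega), ne_of_apply_ne ZMod.val (by omega),
    ne_of_apply_ne ZMod.val (by omega), ne_of_apply_ne ZMod.val (by omega),
    ne_of_apply_ne ZMod.val (by omega), ne_of_apply_ne ZMod.val (by omega),
    Or.inl (Or.inl ⟨hc, hd'⟩)⟩

lemma edgesCross_of_val_sub_lt {p a b c d : ZMod n} (hac : (a - p).val < (c - p).val)
    (hcb : (c - p).val < (b - p).val)
    (hd : (d - p).val < (a - p).val ∨ (b - p).val < (d - p).val) : EdgesCross a b c d :=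
  (edgesCross_sub_iff p a b c d).1 (edgesCross_of_val_lt hac hcb hd)

lemma OuterKPlanarDrawing.eq_of_edgesCross {H : SimpleGraph (ZMod n)}
    (hH : OuterKPlanarDrawing H 1) {a b c d d' : ZMod n} (hab : H.Adj a b) (hcd : H.Adj c d)
    (hcd' : H.Adj c d') (h : EdgesCross a b c d) (h' : EdgesCross a b c d') : d = d' := by
  refine Sym2.congr_right.1
    ((Set.ncard_le_one (Set.toFinite _)).1 (hH s(a, b) hab) s(c, d) ?_ s(c, d') ?_)
  · exact ⟨hcd, a, b, c, d, rfl, rfl, h⟩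
  · exact ⟨hcd', a, b, c, d', rfl, rfl, h'⟩

end Circle

lemma ZMod.natCast_ne_zero_of_lt {m a : ℕ} (ha : 0 < a) (ham : a < m) : (a : ZMod m) ≠ 0 := by
  rw [Ne, ZMod.natCast_eq_zero_iff]
  exact Nat.not_dvd_of_pos_of_lt ha ham

lemma ZMod.eq_add_one_iff_val {m : ℕ} (hm : 1 < m) (j k : ZMod m) :
    k = j + 1 ↔ k.val = j.val + 1 ∨ (j.val + 1 = m ∧ k.val = 0) := by
  have : NeZero m := ⟨by omega⟩
  have hj := j.val_lt
  have hk := k.val_lt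
  rw [← ZMod.val_injective _ |>.eq_iff, ZMod.val_add, ZMod.val_one_eq_one_mod,
    Nat.mod_eq_of_lt hm]
  rcases Nat.lt_or_ge (j.val + 1) m with h | h
  · rw [Nat.mod_eq_of_lt h]
    constructor <;> intro <;> omega
  · rw [show j.val + 1 = m by omega, Nat.mod_self]
    constructor <;> intro <;> omega

section Cycles
variable {V : Type*} (G : SimpleGraph V)

def IsCycleMap {m : ℕ} (w : ZMod m → V) : Prop :=
  Function.Injective w ∧ ∀ j, G.Adj (w j) (w (j + 1))

def IsInducedCycleMap {m : ℕ} (w : ZMod m → V) : Prop :=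
  Function.Injective w ∧ ∀ j k, G.Adj (w j) (w k) ↔ k = j + 1 ∨ j = k + 1

def IsInducedPathMap (p : ℕ → V) (L : ℕ) : Prop :=
  Set.InjOn p (Set.Iic L) ∧
    ∀ s ≤ L, ∀ t ≤ L, (G.Adj (p s) (p t) ↔ t = s + 1 ∨ s = t + 1)

/-- The rim has length at least four because `K₄`, the wheel with a triangle as rim, is
outer 1-planar. -/
def WheelFree : Prop :=
  ∀ m, 4 ≤ m → ∀ w : ZMod m → V, IsCycleMap G w → ∀ z, ¬ ∀ j, G.Adj z (w j)

variable {G}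

lemma IsCycleMap.adj_sub_one {m : ℕ} {w : ZMod m → V} (hw : IsCycleMap G w) (j : ZMod m) :
    G.Adj (w j) (w (j - 1)) := by
  simpa using (hw.2 (j - 1)).symm

lemma WheelFree.of_map {W : Type*} (f : V ↪ W) (h : WheelFree (G.map f)) : WheelFree G :=
  fun m hm w hw z hz => h m hm (f ∘ w) ⟨f.injective.comp hw.1, fun j => by simpa using hw.2 j⟩
    (f z) (fun j => by simpa using hz j)

end Cycles

section Drawing
variable {n : ℕ} [NeZero n] {H : SimpleGraph (ZMod n)}

/-- Positions are measured from the triangle vertex `z`: `b` lies strictly inside the arc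
spanned by the edge `a x` and `z` outside it, so whichever side of that arc `y` is on, two
sides of the triangle `z b y` cross `a x`. -/
lemma OuterKPlanarDrawing.false_of_triangle_straddling (hH : OuterKPlanarDrawing H 1)
    {z b y a x : ZMod n} (hzb : H.Adj z b) (hby : H.Adj b y) (hzy : H.Adj z y) (hax : H.Adj a x)
    (hya : y ≠ a) (hyx : y ≠ x) (ha : a ≠ z) (hab : (a - z).val < (b - z).val)
    (hbx : (b - z).val < (x - z).val) : False := by
  have hz : (z - z).val < (a - z).val := by simpa [ZMod.val_pos, sub_eq_zero] using ha
  have hne : ∀ {u v : ZMod n}, u ≠ v → (u - z).val ≠ (v - z).val :=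
    fun huv h => huv (sub_left_inj.1 (ZMod.val_injective _ h))
  have hzb' : EdgesCross a x b z := edgesCross_of_val_sub_lt hab hbx (Or.inl hz)
  by_cases hin : (a - z).val < (y - z).val ∧ (y - z).val < (x - z).val
  · have hzy' : EdgesCross a x y z := edgesCross_of_val_sub_lt hin.1 hin.2 (Or.inl hz)
    exact hby.ne (hH.eq_of_edgesCross hax hzb hzy hzb'.swap_right hzy'.swap_right)
  · have hby' : EdgesCross a x b y := by
      refine edgesCross_of_val_sub_lt hab hbx ?_
      have := hne hya
      have := hne hyx
      omega
    exact hzy.ne (hH.eq_of_edgesCross hax hzb.symm hby hzb' hby')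

theorem OuterKPlanarDrawing.wheelFree (hH : OuterKPlanarDrawing H 1) : WheelFree H := by
  intro m hm w hw z hz
  have : NeZero m := ⟨by omega⟩
  have h1 : (1 : ZMod m) ≠ 0 := by
    exact_mod_cast ZMod.natCast_ne_zero_of_lt (a := 1) one_pos (by omega)
  have h2 : (2 : ZMod m) ≠ 0 := by
    exact_mod_cast ZMod.natCast_ne_zero_of_lt (a := 2) two_pos (by omega)
  have h3 : (3 : ZMod m) ≠ 0 := by
    exact_mod_cast ZMod.natCast_ne_zero_of_lt (a := 3) three_pos (by omega)
  set pos : ZMod m → ℕ := fun j => (w j - z).val with hpos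
  have hinj : Function.Injective pos :=
    fun j k h => hw.1 (sub_left_inj.1 (ZMod.val_injective _ h))
  obtain ⟨j₀, -, hj₀⟩ := Finset.exists_min_image Finset.univ pos Finset.univ_nonempty
  have hmin : ∀ j ≠ j₀, pos j₀ < pos j :=
    fun j hj => (hj₀ j (Finset.mem_univ _)).lt_of_ne (hinj.ne hj.symm)
  obtain ⟨j₁, hj₁, hj₁min⟩ := Finset.exists_min_image (Finset.univ.erase j₀) pos
    ⟨j₀ + 1, by simpa using h1⟩
  have hj₁₀ : j₁ ≠ j₀ := Finset.ne_of_mem_erase hj₁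
  have hsec : ∀ j ≠ j₀, j ≠ j₁ → pos j₁ < pos j := fun j hj hj' =>
    (hj₁min j (Finset.mem_erase.2 ⟨hj, Finset.mem_univ _⟩)).lt_of_ne (hinj.ne hj'.symm)
  have hw₀ : w j₀ ≠ z := (hz j₀).ne.symm
  -- the second closest rim vertex is a rim neighbour of the closest one, as otherwise the
  -- spoke to it would cross both rim edges at `w j₀`
  have hj₁_adj : j₁ = j₀ + 1 ∨ j₁ = j₀ - 1 := by
    by_contra! h
    have hz0 : (z - z).val < pos j₀ := by simpa [hpos, ZMod.val_pos, sub_eq_zero] using hw₀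
    have hnext : EdgesCross z (w j₁) (w j₀) (w (j₀ + 1)) :=
      edgesCross_of_val_sub_lt hz0 (hmin j₁ hj₁₀)
        (Or.inr (hsec _ (by simpa using h1) h.1.symm))
    have hprev : EdgesCross z (w j₁) (w j₀) (w (j₀ - 1)) :=
      edgesCross_of_val_sub_lt hz0 (hmin j₁ hj₁₀)
        (Or.inr (hsec _ (by simpa [sub_eq_self] using h1) h.2.symm))
    have := hH.eq_of_edgesCross (hz j₁) (hw.2 j₀) (hw.adj_sub_one j₀) hnext hprev
    exact h2 (by linear_combination hw.1 this)
  -- the triangle `z`, `w j₁`, `w (j₁ ± 1)` straddles the other rim edge at `w j₀`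
  rcases hj₁_adj with rfl | rfl
  · exact hH.false_of_triangle_straddling (hz (j₀ + 1)) (hw.2 _) (hz _) (hw.adj_sub_one j₀)
      (hw.1.ne fun h => h2 (by linear_combination h))
      (hw.1.ne fun h => h3 (by linear_combination h)) hw₀ (hmin _ hj₁₀)
      (hsec _ (fun h => h1 (by linear_combination -h)) fun h => h2 (by linear_combination -h))
  · exact hH.false_of_triangle_straddling (hz (j₀ - 1)) (hw.adj_sub_one _) (hz _) (hw.2 j₀)
      (hw.1.ne fun h => h2 (by linear_combination -h))
      (hw.1.ne fun h => h3 (by linear_combination -h)) hw₀ (hmin _ hj₁₀)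
      (hsec _ (fun h => h1 (by linear_combination h)) fun h => h2 (by linear_combination h))

theorem OuterKPlanar.wheelFree {V : Type*} [Fintype V] {G : SimpleGraph V}
    (h : OuterKPlanar G 1) : WheelFree G := by
  obtain ⟨f, hf⟩ := h
  intro m hm w hw z
  have : Nonempty V := ⟨z⟩
  have : NeZero (Fintype.card V) := ⟨Fintype.card_ne_zero⟩
  exact WheelFree.of_map f.toEmbedding hf.wheelFree m hm w hw z

end Drawing

section InducedCycles
variable {V : Type*} {G : SimpleGraph V}

lemma IsInducedCycleMap.isCycleMap {m : ℕ} {w : ZMod m → V} (hw : IsInducedCycleMap G w) :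
    IsCycleMap G w :=
  ⟨hw.1, fun j => (hw.2 j (j + 1)).2 (Or.inl rfl)⟩

lemma IsInducedCycleMap.one_ne_zero {m : ℕ} {w : ZMod m → V} (hw : IsInducedCycleMap G w) :
    (1 : ZMod m) ≠ 0 :=
  fun h => G.irrefl ((hw.2 0 0).2 (Or.inl (by rw [h, add_zero])))

lemma IsInducedCycleMap.isInducedPathMap_rotate {m : ℕ} [NeZero m] {w : ZMod m → V}
    (hw : IsInducedCycleMap G w) (k : ZMod m) :
    IsInducedPathMap G (fun s : ℕ => w (k + s)) (m - 2) := by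
  have hm : 1 < m := by
    by_contra! h
    obtain rfl : m = 1 := by have := NeZero.pos m; omega
    exact hw.one_ne_zero (Subsingleton.elim _ _)
  have hcast : ∀ s t : ℕ, s < m → t < m → ((s : ZMod m) = t ↔ s = t) := by
    intro s t hs ht
    rw [ZMod.natCast_eq_natCast_iff', Nat.mod_eq_of_lt hs, Nat.mod_eq_of_lt ht]
  have hsucc : ∀ s t : ℕ, k + t = k + s + 1 ↔ (t : ZMod m) = ((s + 1 : ℕ) : ZMod m) := by
    intro s t
    rw [add_assoc, add_right_inj, Nat.cast_succ]
  refine ⟨fun s (hs : s ≤ m - 2) t (ht : t ≤ m - 2) h =>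
    (hcast s t (by omega) (by omega)).1 (add_left_cancel (hw.1 h)),
    fun s hs t ht => ?_⟩
  rw [hw.2, hsucc, hsucc, hcast t (s + 1) (by omega) (by omega),
    hcast s (t + 1) (by omega) (by omega)]

lemma IsInducedPathMap.shift {p : ℕ → V} {L a b : ℕ} (hp : IsInducedPathMap G p L)
    (hab : a ≤ b) (hbL : b ≤ L) : IsInducedPathMap G (fun s => p (a + s)) (b - a) := by
  refine ⟨fun s (hs : s ≤ b - a) t (ht : t ≤ b - a) h => ?_, fun s hs t ht => ?_⟩
  · have := hp.1 (show a + s ≤ L by omega) (show a + t ≤ L by omega) h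
    omega
  · rw [hp.2 _ (by omega) _ (by omega)]
    omega

lemma IsInducedPathMap.exists_isInducedCycleMap_of_adj_iff {p : ℕ → V} {L : ℕ}
    (hp : IsInducedPathMap G p L) {z : V} (hz : ∀ s ≤ L, z ≠ p s)
    (hzp : ∀ s ≤ L, G.Adj z (p s) ↔ s = 0 ∨ s = L) :
    ∃ w : ZMod (L + 2) → V,
      IsInducedCycleMap G w ∧ ∀ j, w j = z ∨ ∃ s ≤ L, w j = p s := by
  refine ⟨fun j => if j.val ≤ L then p j.val else z, ⟨fun j k h => ?_, fun j k => ?_⟩,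
    fun j => ?_⟩
  · have hj := j.val_lt
    have hk := k.val_lt
    apply ZMod.val_injective
    dsimp only at h
    split_ifs at h with hjL hkL hkL
    · exact hp.1 hjL hkL h
    · exact absurd h.symm (hz _ hjL)
    · exact absurd h (hz _ hkL)
    · omega
  · have hj := j.val_lt
    have hk := k.val_lt
    rw [ZMod.eq_add_one_iff_val (by omega), ZMod.eq_add_one_iff_val (by omega)]
    dsimp only
    split_ifs with hjL hkL hkL
    · rw [hp.2 _ hjL _ hkL]
      omega
    · rw [G.adj_comm, hzp _ hjL]
      omega
    · rw [hzp _ hkL]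
      omega
    · simp only [G.irrefl, false_iff]
      omega
  · dsimp only
    split_ifs with h
    exacts [Or.inr ⟨_, h, rfl⟩, Or.inl rfl]

/-- The new cycle runs through `z` and the part of the path between the last neighbour of `z`
before `s` and the first one after it. -/
lemma IsInducedPathMap.exists_isInducedCycleMap_of_not_adj {p : ℕ → V} {L : ℕ}
    (hp : IsInducedPathMap G p L) {z : V} (hz : ∀ s ≤ L, z ≠ p s) (h0 : G.Adj z (p 0))
    (hL : G.Adj z (p L)) {s : ℕ} (hsL : s ≤ L) (hs : ¬ G.Adj z (p s)) :
    ∃ m, 4 ≤ m ∧ ∃ w : ZMod m → V,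
      IsInducedCycleMap G w ∧ ∀ j, w j = z ∨ ∃ t ≤ L, w j = p t := by
  classical
  set a := Nat.findGreatest (fun t => G.Adj z (p t)) s
  have hex : ∃ d, G.Adj z (p (s + d)) := ⟨L - s, by rwa [Nat.add_sub_cancel' hsL]⟩
  set d := Nat.find hex
  have ha : G.Adj z (p a) :=
    Nat.findGreatest_spec (P := fun t => G.Adj z (p t)) (Nat.zero_le s) h0
  have has : a ≤ s := Nat.findGreatest_le s
  have hd : G.Adj z (p (s + d)) := Nat.find_spec hex
  have hdL : d ≤ L - s := Nat.find_min' hex (by rwa [Nat.add_sub_cancel' hsL])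
  have ha_ne : a ≠ s := fun h => hs (h ▸ ha)
  have hd_ne : d ≠ 0 := fun h => hs (by simpa [h] using hd)
  have hgap : ∀ t, a < t → t < s + d → ¬ G.Adj z (p t) := by
    intro t hat htb
    rcases le_or_gt t s with hts | hts
    · exact Nat.findGreatest_is_greatest hat hts
    · have := Nat.find_min hex (show t - s < d by omega)
      rwa [Nat.add_sub_cancel' hts.le] at this
  have hadj : ∀ t ≤ s + d - a, G.Adj z (p (a + t)) ↔ t = 0 ∨ t = s + d - a := by
    intro t ht
    refine ⟨fun h => ?_, ?_⟩
    · by_contra! h'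
      exact hgap (a + t) (by omega) (by omega) h
    · rintro (rfl | rfl)
      · simpa using ha
      · rwa [Nat.add_sub_cancel' (by omega)]
  have hq := hp.shift (show a ≤ s + d by omega) (by omega)
  obtain ⟨w, hw, hwp⟩ :=
    hq.exists_isInducedCycleMap_of_adj_iff (fun t _ => hz _ (by omega)) hadj
  exact ⟨_, by omega, w, hw,
    fun j => (hwp j).imp_right fun ⟨t, ht, h⟩ => ⟨a + t, by omega, h⟩⟩

end InducedCycles

section Dismantling
variable {V : Type*} {G : SimpleGraph V}

variable (G) in
def DominatesIn (S : Finset V) (z u : V) : Prop :=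
  ∀ y ∈ S, ReflGen G.Adj u y → ReflGen G.Adj z y

variable (G) in
def IsCornerless (H : Finset V) : Prop :=
  ∀ u ∈ H, ∀ z ∈ H, z ≠ u → ¬ DominatesIn G H z u

variable (G) in
def HasInducedCycleIn (S : Finset V) : Prop :=
  ∃ m, 4 ≤ m ∧ ∃ w : ZMod m → V, IsInducedCycleMap G w ∧ ∀ j, w j ∈ S

lemma IsInducedCycleMap.adj_of_dominatesIn {m : ℕ} {w : ZMod m → V}
    (hw : IsInducedCycleMap G w) (hm : 4 ≤ m) {S : Finset V} (hwS : ∀ j, w j ∈ S) {z : V}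
    {i : ZMod m} (hz : z ≠ w i)
    (hdom : DominatesIn G S z (w i)) :
    G.Adj z (w (i - 1)) ∧ G.Adj z (w i) ∧ G.Adj z (w (i + 1)) := by
  have h2 : (2 : ZMod m) ≠ 0 := by
    exact_mod_cast ZMod.natCast_ne_zero_of_lt (a := 2) two_pos (by omega)
  have h3 : (3 : ZMod m) ≠ 0 := by
    exact_mod_cast ZMod.natCast_ne_zero_of_lt (a := 3) three_pos (by omega)
  have hdom' : ∀ j, ReflGen G.Adj (w i) (w j) → w j = z ∨ G.Adj z (w j) :=
    fun j h => (reflGen_iff _ _ _).1 (hdom _ (hwS j) h)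
  have hi := (hdom' i .refl).resolve_left hz.symm
  have hprev := hdom' (i - 1) (.single ((hw.2 _ _).2 (Or.inr (by ring))))
  have hnext := hdom' (i + 1) (.single ((hw.2 _ _).2 (Or.inl rfl)))
  -- the two cycle neighbours of `w i` are distinct and non-adjacent, so neither is `z`
  have hne : w (i - 1) ≠ w (i + 1) := hw.1.ne fun h => h2 (by linear_combination -h)
  have hnadj : ¬ G.Adj (w (i - 1)) (w (i + 1)) := by
    rw [hw.2]
    rintro (h | h)
    · exact hw.one_ne_zero (by linear_combination h)
    · exact h3 (by linear_combination -h)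
  rcases hprev with hp | hp <;> rcases hnext with hn | hn
  · exact absurd (hp.trans hn.symm) hne
  · exact absurd (hp ▸ hn) hnadj
  · exact absurd (hn ▸ hp).symm hnadj
  · exact ⟨hp, hi, hn⟩

lemma IsInducedCycleMap.ne_of_adj_of_adj_of_adj {m : ℕ} {w : ZMod m → V}
    (hw : IsInducedCycleMap G w) {x : V} {i : ZMod m} (hprev : G.Adj x (w (i - 1)))
    (hi : G.Adj x (w i)) (hnext : G.Adj x (w (i + 1))) (j : ZMod m) : x ≠ w j := by
  rintro rfl
  have h1 := hw.one_ne_zero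
  rw [hw.2] at hprev hi hnext
  rcases hi with hi | hi
  · rcases hprev with h | h
    · exact h1 (by linear_combination hi - h)
    · exact h1 (by linear_combination -hi - h)
  · rcases hnext with h | h
    · exact h1 (by linear_combination -hi - h)
    · exact h1 (by linear_combination hi - h)

/-- If `w i` is removed, its dominator `z` sees `w (i - 1)`, `w i`, `w (i + 1)` but, by
wheel-freeness, not the whole cycle; so `z` together with the path `w (i + 1), …, w (i - 1)`
contains a shorter induced cycle avoiding `w i`. -/
lemma HasInducedCycleIn.erase [DecidableEq V] (hG : WheelFree G) {S : Finset V}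
    (hS : HasInducedCycleIn G S) {u z : V} (hz : z ∈ S) (hzu : z ≠ u)
    (hdom : DominatesIn G S z u) : HasInducedCycleIn G (S.erase u) := by
  obtain ⟨m, hm, w, hw, hwS⟩ := hS
  by_cases hu : ∃ i, w i = u
  swap
  · push Not at hu
    exact ⟨m, hm, w, hw, fun j => Finset.mem_erase.2 ⟨hu j, hwS j⟩⟩
  obtain ⟨i, rfl⟩ := hu
  have : NeZero m := ⟨by omega⟩
  obtain ⟨hzp, hzi, hzn⟩ := hw.adj_of_dominatesIn hm hwS hzu hdom
  obtain ⟨g, hg⟩ : ∃ g, ¬ G.Adj z (w g) := by simpa using hG m hm w hw.isCycleMap z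
  have hlast : i + 1 + ((m - 2 : ℕ) : ZMod m) = i - 1 := by
    rw [Nat.cast_sub (by omega), ZMod.natCast_self]
    ring
  -- `w g` lies at position `s` on the path `w (i + 1), …, w (i - 1)` left by removing `w i`
  set s := (g - (i + 1)).val
  have hs : i + 1 + (s : ZMod m) = g := by simp [s]
  have hsm : s ≤ m - 2 := by
    by_contra! h
    have : s = m - 1 := by have := (g - (i + 1)).val_lt; omega
    have hgi : i = g := by
      rw [← hs, this, Nat.cast_sub (by omega), ZMod.natCast_self]
      ring
    exact hg (hgi ▸ hzi)
  obtain ⟨m', hm', w', hw', hw'S⟩ :=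
    (hw.isInducedPathMap_rotate (i + 1)).exists_isInducedCycleMap_of_not_adj
      (fun _ _ => hw.ne_of_adj_of_adj_of_adj hzp hzi hzn _) (by simpa using hzn)
      (by rwa [hlast]) hsm (by rwa [hs])
  refine ⟨m', hm', w', hw', fun j => ?_⟩
  rcases hw'S j with h | ⟨t, ht, h⟩
  · exact h ▸ Finset.mem_erase.2 ⟨hzu, hz⟩
  · refine h ▸ Finset.mem_erase.2 ⟨fun h' => ?_, hwS _⟩
    refine ZMod.natCast_ne_zero_of_lt (m := m) (a := t + 1) (by omega) (by omega) ?_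
    push_cast
    linear_combination hw.1 h'

variable (G) in
structure IsRetraction (S H : Finset V) (φ : V → V) : Prop where
  mapsTo : ∀ x ∈ S, φ x ∈ H
  apply_of_mem : ∀ x ∈ H, φ x = x
  reflGen_adj : ∀ x ∈ S, ∀ y ∈ S, G.Adj x y → ReflGen G.Adj (φ x) (φ y)

lemma IsRetraction.refl (S : Finset V) : IsRetraction G S S id :=
  ⟨fun _ hx => hx, fun _ _ => rfl, fun _ _ _ _ h => .single h⟩

lemma IsRetraction.comp {S T H : Finset V} {σ φ : V → V} (hσ : IsRetraction G S T σ)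
    (hφ : IsRetraction G T H φ) (hHT : H ⊆ T) : IsRetraction G S H (φ ∘ σ) where
  mapsTo x hx := hφ.mapsTo _ (hσ.mapsTo x hx)
  apply_of_mem x hx := by
    rw [Function.comp_apply, hσ.apply_of_mem x (hHT hx), hφ.apply_of_mem x hx]
  reflGen_adj x hx y hy hxy := by
    rcases (reflGen_iff _ _ _).1 (hσ.reflGen_adj x hx y hy hxy) with h | h
    · simp only [Function.comp_apply, h]
      exact .refl
    · exact hφ.reflGen_adj _ (hσ.mapsTo x hx) _ (hσ.mapsTo y hy) h

lemma isRetraction_update_of_dominatesIn [DecidableEq V] {S : Finset V} {u z : V} (hz : z ∈ S)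
    (hzu : z ≠ u) (hdom : DominatesIn G S z u) :
    IsRetraction G S (S.erase u) (Function.update id u z) where
  mapsTo x hx := by
    rcases eq_or_ne x u with rfl | hxu
    · simpa using Finset.mem_erase.2 ⟨hzu, hz⟩
    · simpa [hxu] using Finset.mem_erase.2 ⟨hxu, hx⟩
  apply_of_mem x hx := by simp [Finset.ne_of_mem_erase hx]
  reflGen_adj x hx y hy hxy := by
    rcases eq_or_ne x u with rfl | hxu
    · simpa [hxy.ne.symm] using hdom y hy (.single hxy)
    rcases eq_or_ne y u with rfl | hyu
    · simpa [hxu, reflGen_iff, eq_comm, G.adj_comm] using hdom x hx (.single hxy.symm)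
    · simpa [hxu, hyu] using ReflGen.single hxy

theorem exists_isCornerless_retraction [DecidableEq V] (hG : WheelFree G) (S : Finset V)
    (hS : HasInducedCycleIn G S) :
    ∃ H ⊆ S, ∃ φ : V → V,
      IsRetraction G S H φ ∧ HasInducedCycleIn G H ∧ IsCornerless G H := by
  induction S using Finset.strongInduction with
  | H S ih =>
    by_cases hS' : IsCornerless G S
    · exact ⟨S, subset_rfl, id, .refl S, hS, hS'⟩
    simp only [IsCornerless, not_forall, not_not] at hS'
    obtain ⟨u, hu, z, hz, hzu, hdom⟩ := hS'
    obtain ⟨H, hHS, φ, hφ, hH, hH'⟩ :=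
      ih (S.erase u) (Finset.erase_ssubset hu) (hS.erase hG hz hzu hdom)
    exact ⟨H, hHS.trans (Finset.erase_subset u S), _,
      (isRetraction_update_of_dominatesIn hz hzu hdom).comp hφ hHS, hH, hH'⟩

lemma HasInducedCycleIn.one_lt_card {S : Finset V} (hS : HasInducedCycleIn G S) : 1 < S.card := by
  obtain ⟨m, -, w, hw, hwS⟩ := hS
  exact Finset.one_lt_card.2 ⟨w 0, hwS 0, w 1, hwS 1, hw.1.ne hw.one_ne_zero.symm⟩

end Dismantling

section CopsAndRobber
variable {V : Type*} {G : SimpleGraph V}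

lemma hasInducedCycleIn_univ_of_not_isChordal [Fintype V] (h : ¬ IsChordal G) :
    HasInducedCycleIn G Finset.univ := by
  simp only [IsChordal, not_forall, not_isEmpty_iff] at h
  obtain ⟨U, m, hm, ⟨e⟩⟩ := h
  obtain ⟨k, rfl⟩ : ∃ k, m = k + 2 := ⟨m - 2, by omega⟩
  let ψ : ZMod (k + 2) ≃+* Fin (k + 2) := (ZMod.finEquiv (k + 2)).symm
  refine ⟨k + 2, hm, fun j => e.symm (ψ j), ⟨fun a b h => ψ.injective (e.symm.injective
    (Subtype.ext h)), fun a b => e.symm.map_adj_iff.trans ?_⟩, fun _ => Finset.mem_univ _⟩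
  rw [SimpleGraph.cycleGraph_adj, ← map_sub, ← map_sub, ← map_one ψ, ψ.injective.eq_iff,
    ψ.injective.eq_iff, sub_eq_iff_eq_add', sub_eq_iff_eq_add', or_comm]

lemma IsCornerless.exists_escape {H : Finset V} (hH : IsCornerless G H) {u z : V} (hu : u ∈ H)
    (hz : z ∈ H) (hzu : z ≠ u) : ∃ y ∈ H, ReflGen G.Adj u y ∧ ¬ ReflGen G.Adj z y := by
  simpa [DominatesIn] using hH u hu z hz hzu

theorem CopStrategy.not_winning_of_safe (Safe : V → V → Prop) (hstart : ∀ c, ∃ r, Safe c r)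
    (hsafe : ∀ c r, Safe c r → r ≠ c)
    (hmove : ∀ c c' r, Safe c r → ReflGen G.Adj c c' →
      r ≠ c' ∧ ∃ r', ReflGen G.Adj r r' ∧ Safe c' r')
    (CS : CopStrategy G 1) : ¬ CS.Winning := by
  choose r₀ hr₀ using hstart
  have hnext : ∀ c r, ∃ r', ReflGen G.Adj r r' ∧
      ((∃ r'', ReflGen G.Adj r r'' ∧ Safe c r'') → Safe c r') := by
    intro c r
    by_cases h : ∃ r', ReflGen G.Adj r r' ∧ Safe c r'
    · obtain ⟨r', hr', hs⟩ := h
      exact ⟨r', hr', fun _ => hs⟩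
    · exact ⟨r, .refl, fun h' => absurd h' h⟩
  choose next hnext using hnext
  let RS : RobberStrategy G 1 :=
    ⟨fun c => r₀ (c 0), fun c r => next (c 0) r,
      fun c r => (reflGen_iff _ _ _).1 (hnext _ r).1⟩
  have hcop : ∀ c r, ReflGen G.Adj (c 0) (CS.move c r 0) :=
    fun c r => (reflGen_iff _ _ _).2 (CS.valid c r 0)
  have safe : ∀ t, Safe ((gamePlay CS RS t).1 0) (gamePlay CS RS t).2 := by
    intro t
    induction t with
    | zero => exact hr₀ _
    | succ t ih => exact (hnext _ _).2 (hmove _ _ _ ih (hcop _ _)).2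
  intro hwin
  obtain ⟨t, ⟨i, hi⟩ | ⟨i, hi⟩⟩ := hwin RS <;> obtain rfl := Subsingleton.elim i 0
  · exact hsafe _ _ (safe t) hi.symm
  · exact (hmove _ _ _ (safe t) (hcop _ (gamePlay CS RS t).2)).1 hi.symm

/-- The robber stays in `H` out of reach of the cop's shadow `φ c`: a cop move shifts the
shadow by at most one step, and as `H` has no corner the robber can step out of reach again. -/
theorem CopStrategy.not_winning_of_isRetraction [Fintype V] {H : Finset V} {φ : V → V}
    (hφ : IsRetraction G Finset.univ H φ) (hH : IsCornerless G H) (hH₁ : 1 < H.card)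
    (CS : CopStrategy G 1) : ¬ CS.Winning := by
  refine CS.not_winning_of_safe (fun c r => r ∈ H ∧ ¬ ReflGen G.Adj (φ c) r)
    (fun c => ?_) ?_ ?_
  · obtain ⟨u, hu, hne⟩ := Finset.exists_mem_ne hH₁ (φ c)
    obtain ⟨y, hy, -, hy'⟩ := hH.exists_escape hu (hφ.mapsTo c (Finset.mem_univ _)) hne.symm
    exact ⟨y, hy, hy'⟩
  · rintro c r ⟨hr, hr'⟩ rfl
    exact hr' (by rw [hφ.apply_of_mem _ hr])
  · rintro c c' r ⟨hr, hr'⟩ hcc'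
    have hφc : ReflGen G.Adj (φ c) (φ c') := by
      rcases (reflGen_iff _ _ _).1 hcc' with rfl | h
      · exact .refl
      · exact hφ.reflGen_adj _ (Finset.mem_univ _) _ (Finset.mem_univ _) h
    have hrc' : r ≠ φ c' := fun h => hr' (h ▸ hφc)
    refine ⟨fun h => hrc' (by rw [← h, hφ.apply_of_mem _ hr]), ?_⟩
    obtain ⟨y, hy, hry, hy'⟩ :=
      hH.exists_escape hr (hφ.mapsTo c' (Finset.mem_univ _)) hrc'.symm
    exact ⟨y, hry, hy, hy'⟩

lemma CopStrategy.not_winning_of_zero [Nonempty V] (CS : CopStrategy G 0) : ¬ CS.Winning := by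
  intro hwin
  obtain ⟨v⟩ := ‹Nonempty V›
  obtain ⟨-, ⟨i, -⟩ | ⟨i, -⟩⟩ :=
    hwin ⟨fun _ => v, fun _ r => r, fun _ _ => Or.inl rfl⟩ <;> exact i.elim0

lemma exists_winning_copStrategy [Fintype V] : ∃ k, ∃ CS : CopStrategy G k, CS.Winning :=
  ⟨Fintype.card V, ⟨(Fintype.equivFin V).symm, fun c _ => c, fun _ _ _ => Or.inl rfl⟩,
    fun RS => ⟨0, Or.inl ⟨Fintype.equivFin V (RS.init _), Equiv.symm_apply_apply _ _⟩⟩⟩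

lemma le_copNumber {k : ℕ} (hex : ∃ k, ∃ CS : CopStrategy G k, CS.Winning)
    (h : ∀ j < k, ¬ ∃ CS : CopStrategy G j, CS.Winning) : k ≤ copNumber G :=
  le_csInf hex fun j hj => not_lt.1 fun hjk => h j hjk hj

end CopsAndRobber

theorem outer_one_planar_not_chordal_copnumber_ge_two_general {V : Type*} [Fintype V]
    (G : SimpleGraph V) (h1p : OuterKPlanar G 1)
    (hnc : ¬ IsChordal G) :
    2 ≤ copNumber G ∧ ¬ ∃ CS : CopStrategy G 1, CS.Winning := by
  classical
  have hcyc := hasInducedCycleIn_univ_of_not_isChordal hnc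
  have hone : ¬ ∃ CS : CopStrategy G 1, CS.Winning := by
    rintro ⟨CS, hCS⟩
    obtain ⟨H, -, φ, hφ, hH, hH'⟩ := exists_isCornerless_retraction h1p.wheelFree _ hcyc
    exact CS.not_winning_of_isRetraction hφ hH' hH.one_lt_card hCS
  obtain ⟨_, _, w, _⟩ := hcyc
  have : Nonempty V := ⟨w 0⟩
  refine ⟨le_copNumber exists_winning_copStrategy fun j hj => ?_, hone⟩
  interval_cases j
  · exact fun ⟨CS, hCS⟩ => CS.not_winning_of_zero hCS
  · exact hone

/-- A finite connected outer 1-planar graph that is not chordal has cop number at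
least two; that is, a single cop cannot catch the robber. -/
theorem outer_one_planar_not_chordal_copnumber_ge_two {V : Type*} [Fintype V]
    (G : SimpleGraph V) (hconn : G.Connected) (h1p : OuterKPlanar G 1)
    (hnc : ¬ IsChordal G) :
    2 ≤ copNumber G ∧ ¬ ∃ CS : CopStrategy G 1, CS.Winning :=
  outer_one_planar_not_chordal_copnumber_ge_two_general G h1p hnc
end

section
/- For every natural number c, there exists a finite connected simple graph G whose cop number satisfies c(G) ≥ c. -/
/-! Aigner–Fromme: in a graph without triangles and 4-cycles, a cop standing off the robber's
vertex `u` dominates at most one neighbour of `u`. So if every vertex has more than `k`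
neighbours, the robber can always start on, and then step to, a vertex that none of `k` cops
can reach in one move, and is never caught: the cop number is at least the minimum degree.
The point–line incidence graph of the affine plane over `𝔽_p` (non-vertical lines only) is
connected, `p`-regular, bipartite, and two points lie on at most one common line, so it needs
at least `p ≥ c` cops. -/

namespace SimpleGraph

variable {V : Type*} (G : SimpleGraph V)

/-- Oriented so that `G.Dominates u v` is also exactly the condition on a single move from `u`
to `v`. -/
def Dominates (u v : V) : Prop := v = u ∨ G.Adj u v

def IsSafe {k : ℕ} (cops : Fin k → V) (r : V) : Prop := ∀ i, ¬ G.Dominates (cops i) r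

structure HasSafeMoves (k : ℕ) : Prop where
  exists_isSafe (cops : Fin k → V) : ∃ r, G.IsSafe cops r
  exists_dominates_isSafe (cops : Fin k → V) (r : V) (hr : ∀ i, cops i ≠ r) :
    ∃ w, G.Dominates r w ∧ G.IsSafe cops w

variable {G}

lemma IsSafe.move_ne {k : ℕ} {cops : Fin k → V} {r : V} (h : G.IsSafe cops r)
    (CS : CopStrategy G k) (r' : V) (i : Fin k) : CS.move cops r' i ≠ r := by
  intro hi
  rcases CS.valid cops r' i with hstay | hadj
  · exact h i (Or.inl (hi ▸ hstay))
  · exact h i (Or.inr (hi ▸ hadj))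

open Classical in
noncomputable def HasSafeMoves.evader {k : ℕ} (h : G.HasSafeMoves k) : RobberStrategy G k where
  init cops := (h.exists_isSafe cops).choose
  move cops r :=
    if hr : ∀ i, cops i ≠ r then (h.exists_dominates_isSafe cops r hr).choose else r
  valid cops r := by
    split_ifs with hr
    · exact (h.exists_dominates_isSafe cops r hr).choose_spec.1
    · exact Or.inl rfl

lemma HasSafeMoves.isSafe_gamePlay_evader {k : ℕ} (h : G.HasSafeMoves k) (CS : CopStrategy G k)
    (t : ℕ) : G.IsSafe (gamePlay CS h.evader t).1 (gamePlay CS h.evader t).2 := by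
  induction t with
  | zero => exact (h.exists_isSafe CS.init).choose_spec
  | succ t ih =>
    have hfree := ih.move_ne CS (gamePlay CS h.evader t).2
    have hmove : h.evader.move _ _ = (h.exists_dominates_isSafe _ _ hfree).choose := dif_pos hfree
    show G.IsSafe _ (h.evader.move _ _)
    exact hmove ▸ (h.exists_dominates_isSafe _ _ hfree).choose_spec.2

lemma HasSafeMoves.not_winning {k : ℕ} (h : G.HasSafeMoves k) (CS : CopStrategy G k) :
    ¬ CS.Winning := by
  intro hwin
  obtain ⟨t, ⟨i, hcaught⟩ | ⟨i, hcaught⟩⟩ := hwin h.evader <;>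
    have hsafe := h.isSafe_gamePlay_evader CS t
  · exact hsafe i (Or.inl hcaught.symm)
  · exact hsafe.move_ne CS _ i hcaught

open Finset

lemma eq_of_adj_of_dominates (hK3 : G.CliqueFree 3)
    (hC4 : ∀ u v, u ≠ v → (G.commonNeighbors u v).Subsingleton) {u z w₁ w₂ : V}
    (hz : z ≠ u) (hu₁ : G.Adj u w₁) (hu₂ : G.Adj u w₂) (hz₁ : G.Dominates z w₁)
    (hz₂ : G.Dominates z w₂) : w₁ = w₂ := by
  classical
  have triangle {a b c : V} (hab : G.Adj a b) (hac : G.Adj a c) (hbc : G.Adj b c) : False :=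
    hK3 {a, b, c} (is3Clique_triple_iff.2 ⟨hab, hac, hbc⟩)
  rcases hz₁ with rfl | hz₁ <;> rcases hz₂ with rfl | hz₂
  · rfl
  · exact (triangle hu₁ hu₂ hz₂).elim
  · exact (triangle hu₂ hu₁ hz₁).elim
  · exact hC4 u z hz.symm ⟨hu₁, hz₁⟩ ⟨hu₂, hz₂⟩

variable [Fintype V] [DecidableRel G.Adj]

/-- Each of the `k` cops dominates at most one of the more than `k` neighbours of `u`. -/
lemma exists_adj_isSafe (hK3 : G.CliqueFree 3)
    (hC4 : ∀ u v, u ≠ v → (G.commonNeighbors u v).Subsingleton) {k : ℕ} {cops : Fin k → V}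
    {u : V} (hu : ∀ i, cops i ≠ u) (hk : k < G.degree u) :
    ∃ w, G.Adj u w ∧ G.IsSafe cops w := by
  classical
  by_contra! hguarded
  have hcover : G.neighborFinset u ⊆
      univ.biUnion fun i => (G.neighborFinset u).filter (G.Dominates (cops i)) := by
    intro w hw
    obtain ⟨i, hi⟩ := not_forall_not.1 (hguarded w ((G.mem_neighborFinset u w).1 hw))
    exact mem_biUnion.2 ⟨i, mem_univ i, mem_filter.2 ⟨hw, hi⟩⟩
  have hone : ∀ i ∈ (univ : Finset (Fin k)),
      #((G.neighborFinset u).filter (G.Dominates (cops i))) ≤ 1 := by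
    refine fun i _ => card_le_one.2 fun w₁ hw₁ w₂ hw₂ => ?_
    rw [mem_filter, mem_neighborFinset] at hw₁ hw₂
    exact G.eq_of_adj_of_dominates hK3 hC4 (hu i) hw₁.1 hw₂.1 hw₁.2 hw₂.2
  have : G.degree u ≤ k := by
    simpa using (card_le_card hcover).trans (card_biUnion_le_card_mul _ _ 1 hone)
  omega

lemma hasSafeMoves_of_lt_minDegree (hK3 : G.CliqueFree 3)
    (hC4 : ∀ u v, u ≠ v → (G.commonNeighbors u v).Subsingleton) {k : ℕ}
    (hk : k < G.minDegree) : G.HasSafeMoves k := by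
  have step {cops : Fin k → V} {u : V} (hu : ∀ i, cops i ≠ u) :
      ∃ w, G.Adj u w ∧ G.IsSafe cops w :=
    G.exists_adj_isSafe hK3 hC4 hu (hk.trans_le (G.minDegree_le_degree u))
  refine ⟨fun cops => ?_, fun cops r hr => ?_⟩
  · rcases isEmpty_or_nonempty V with hV | hV
    · simp at hk
    obtain ⟨u, hu⟩ : ∃ u, ∀ i, cops i ≠ u := by
      by_contra! hsurj
      have := (Fintype.card_le_of_surjective cops hsurj).trans_eq (Fintype.card_fin k)
      have := G.minDegree_lt_card
      omega
    obtain ⟨w, -, hw⟩ := step hu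
    exact ⟨w, hw⟩
  · obtain ⟨w, hrw, hw⟩ := step hr
    exact ⟨w, Or.inr hrw, hw⟩

end SimpleGraph

lemma exists_winning_copStrategy_card {V : Type*} (G : SimpleGraph V) [Fintype V] :
    ∃ CS : CopStrategy G (Fintype.card V), CS.Winning := by
  refine ⟨⟨(Fintype.equivFin V).symm, fun cops _ => cops, fun _ _ _ => Or.inl rfl⟩,
    fun RS => ?_⟩
  exact ⟨0, Or.inl ⟨Fintype.equivFin V (gamePlay _ RS 0).2, Equiv.symm_apply_apply _ _⟩⟩

/-- Finiteness matters: with no winning strategy `copNumber G` is the junk value `sInf ∅ = 0`. -/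
lemma exists_winning_copStrategy_copNumber {V : Type*} (G : SimpleGraph V) [Fintype V] :
    ∃ CS : CopStrategy G (copNumber G), CS.Winning :=
  Nat.sInf_mem (s := {k | ∃ CS : CopStrategy G k, CS.Winning})
    ⟨_, exists_winning_copStrategy_card G⟩

theorem minDegree_le_copNumber {V : Type*} {G : SimpleGraph V} [Fintype V]
    [DecidableRel G.Adj] (hK3 : G.CliqueFree 3)
    (hC4 : ∀ u v, u ≠ v → (G.commonNeighbors u v).Subsingleton) :
    G.minDegree ≤ copNumber G := by
  by_contra! hlt
  obtain ⟨CS, hCS⟩ := exists_winning_copStrategy_copNumber G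
  exact (G.hasSafeMoves_of_lt_minDegree hK3 hC4 hlt).not_winning CS hCS

/-- Points `(x, y)` of the affine plane over `R` sit on the left, non-vertical lines
`y = m * x + b`, encoded as `(m, b)`, on the right. -/
def affineIncidenceGraph (R : Type*) [CommRing R] : SimpleGraph ((R × R) ⊕ (R × R)) where
  Adj
    | .inl (x, y), .inr (m, b) | .inr (m, b), .inl (x, y) => y = m * x + b
    | _, _ => False
  symm := ⟨by rintro (_ | _) (_ | _) h <;> exact h⟩
  loopless := ⟨by rintro (_ | _) h <;> exact h⟩

namespace affineIncidenceGraph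

open SimpleGraph

variable {R : Type*} [CommRing R]

@[simp] lemma adj_inl_inr {x y m b : R} :
    (affineIncidenceGraph R).Adj (.inl (x, y)) (.inr (m, b)) ↔ y = m * x + b := Iff.rfl

@[simp] lemma adj_inr_inl {x y m b : R} :
    (affineIncidenceGraph R).Adj (.inr (m, b)) (.inl (x, y)) ↔ y = m * x + b := Iff.rfl

@[simp] lemma not_adj_inl_inl {p q : R × R} :
    ¬ (affineIncidenceGraph R).Adj (.inl p) (.inl q) := id

@[simp] lemma not_adj_inr_inr {l l' : R × R} :
    ¬ (affineIncidenceGraph R).Adj (.inr l) (.inr l') := id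

lemma isBipartite : (affineIncidenceGraph R).IsBipartite :=
  (Coloring.mk Sum.isLeft <| by rintro (_ | _) (_ | _) h <;> simp_all).colorable

lemma cliqueFree_three : (affineIncidenceGraph R).CliqueFree 3 :=
  isBipartite.cliqueFree (by norm_num)

lemma eq_or_eq_of_incident [NoZeroDivisors R] {x y x' y' m b m' b' : R}
    (h₁ : y = m * x + b) (h₂ : y = m' * x + b') (h₃ : y' = m * x' + b)
    (h₄ : y' = m' * x' + b') :
    (x = x' ∧ y = y') ∨ (m = m' ∧ b = b') := by
  have : (m - m') * (x - x') = 0 := by linear_combination h₂ + h₃ - h₁ - h₄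
  rcases mul_eq_zero.1 this with hm | hx
  · exact .inr ⟨sub_eq_zero.1 hm, by linear_combination h₂ - h₁ - x * hm⟩
  · exact .inl ⟨sub_eq_zero.1 hx, by linear_combination h₁ - h₃ + m * hx⟩

lemma commonNeighbors_subsingleton [NoZeroDivisors R] {u v : (R × R) ⊕ (R × R)}
    (huv : u ≠ v) :
    ((affineIncidenceGraph R).commonNeighbors u v).Subsingleton := by
  rcases u with ⟨x, y⟩ | ⟨m, b⟩ <;> rcases v with ⟨x', y'⟩ | ⟨m', b'⟩ <;>
    rintro (⟨x₁, y₁⟩ | ⟨m₁, b₁⟩) ⟨h₁, h₁'⟩ (⟨x₂, y₂⟩ | ⟨m₂, b₂⟩) ⟨h₂, h₂'⟩ <;>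
    simp only [mem_neighborSet, adj_inl_inr, adj_inr_inl, not_adj_inl_inl, not_adj_inr_inr]
      at h₁ h₁' h₂ h₂'
  · rcases eq_or_eq_of_incident h₁ h₂ h₁' h₂' with ⟨rfl, rfl⟩ | ⟨rfl, rfl⟩
    exacts [(huv rfl).elim, rfl]
  · rcases eq_or_eq_of_incident h₁ h₁' h₂ h₂' with ⟨rfl, rfl⟩ | ⟨rfl, rfl⟩
    exacts [rfl, (huv rfl).elim]

lemma connected : (affineIncidenceGraph R).Connected := by
  have adj {x y m b : R} (h : y = m * x + b) :
      (affineIncidenceGraph R).Reachable (.inl (x, y)) (.inr (m, b)) :=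
    Adj.reachable h
  -- every vertex is joined to some `(0, b)`, and `(0, b)` to `(0, 0)` via the lines `y = x + b`,
  -- `y = 0` through the point `(-b, 0)`
  have axis (b : R) : (affineIncidenceGraph R).Reachable (.inl (0, 0)) (.inl (0, b)) :=
    (((adj (x := 0) (y := 0) (m := 0) (b := 0) (by ring)).trans
      (adj (x := -b) (y := 0) (m := 0) (b := 0) (by ring)).symm).trans
      (adj (x := -b) (y := 0) (m := 1) (b := b) (by ring))).trans
      (adj (x := 0) (y := b) (m := 1) (b := b) (by ring)).symm
  refine (connected_iff_exists_forall_reachable _).2 ⟨.inl (0, 0), ?_⟩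
  rintro (⟨x, y⟩ | ⟨m, b⟩)
  · exact ((axis y).trans (adj (x := 0) (m := 0) (b := y) (by ring))).trans
      (adj (x := x) (m := 0) (b := y) (by ring)).symm
  · exact (axis b).trans (adj (x := 0) (m := m) (b := b) (by ring))

variable [Fintype R] [DecidableRel (affineIncidenceGraph R).Adj]

lemma degree_eq_card (v : (R × R) ⊕ (R × R)) :
    (affineIncidenceGraph R).degree v = Fintype.card R := by
  classical
  rw [← card_neighborFinset_eq_degree, ← Finset.card_univ]
  rcases v with ⟨x, y⟩ | ⟨m, b⟩
  · convert Finset.card_image_of_injective Finset.univ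
      (f := fun m : R => (.inr (m, y - m * x) : (R × R) ⊕ (R × R)))
      fun m m' h => (Prod.ext_iff.1 (Sum.inr_injective h)).1
    ext (_ | ⟨m, b⟩)
    · simp
    · simp [sub_eq_iff_eq_add, add_comm]
  · convert Finset.card_image_of_injective Finset.univ
      (f := fun x : R => (.inl (x, m * x + b) : (R × R) ⊕ (R × R)))
      fun x x' h => (Prod.ext_iff.1 (Sum.inl_injective h)).1
    ext (⟨x, y⟩ | _)
    · simp [eq_comm]
    · simp

lemma minDegree_eq_card : (affineIncidenceGraph R).minDegree = Fintype.card R := by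
  obtain ⟨v, hv⟩ := (affineIncidenceGraph R).exists_minimal_degree_vertex
  rw [hv, degree_eq_card]

end affineIncidenceGraph

/-- For every natural number `c`, there exists a finite connected simple graph whose
cop number is at least `c`. -/
theorem exists_graph_copnumber_ge (c : ℕ) :
    ∃ (V : Type) (_ : Fintype V) (G : SimpleGraph V),
      G.Connected ∧ c ≤ copNumber G := by
  classical
  obtain ⟨p, hcp, hp⟩ := Nat.exists_infinite_primes c
  have : Fact p.Prime := ⟨hp⟩
  refine ⟨_, inferInstance, affineIncidenceGraph (ZMod p), affineIncidenceGraph.connected, ?_⟩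
  calc c ≤ Fintype.card (ZMod p) := by rwa [ZMod.card]
    _ = (affineIncidenceGraph (ZMod p)).minDegree := affineIncidenceGraph.minDegree_eq_card.symm
    _ ≤ copNumber (affineIncidenceGraph (ZMod p)) :=
      minDegree_le_copNumber affineIncidenceGraph.cliqueFree_three
        fun _ _ => affineIncidenceGraph.commonNeighbors_subsingleton
end

section
/- Let G be a finite connected simple graph and let m be an odd positive integer. Let G' be the graph obtained from G by replacing every edge of G by a path of length m (that is, subdividing every edge exactly m − 1 times, with the new internal vertices of distinct edges being distinct). Then c(G') ≥ c(G). -/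
/-- The graph obtained from `G` by replacing every edge by a path of length `m`:
for each edge `e` of `G` there are `m - 1` new internal vertices `(e, 0), …, (e, m-2)`
forming, together with the two endpoints of `e` (taken in increasing order), a path of
length `m` from one endpoint of `e` to the other; distinct edges receive disjoint sets
of internal vertices. -/
def subdivideEdges {V : Type*} [LinearOrder V] (G : SimpleGraph V) (m : ℕ) :
    SimpleGraph (V ⊕ (↥G.edgeSet × Fin (m - 1))) :=
  SimpleGraph.fromRel fun x y =>
    match x, y with
    | Sum.inl u, Sum.inl v => m = 1 ∧ G.Adj u v
    | Sum.inl u, Sum.inr (e, j) =>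
        ((j : ℕ) = 0 ∧ u = Sym2.inf (e : Sym2 V)) ∨
        ((j : ℕ) = m - 2 ∧ u = Sym2.sup (e : Sym2 V))
    | Sum.inr _, Sum.inl _ => False
    | Sum.inr (e, j), Sum.inr (e', j') => e = e' ∧ (j : ℕ) + 1 = (j' : ℕ)

section GenericGame

attribute [local instance] Classical.propDecidable

variable {V : Type*} (H : SimpleGraph V)

/-- legality of a simultaneous cops move -/
def CopsLegal {k : ℕ} (c c' : Fin k → V) : Prop :=
  ∀ i, c' i = c i ∨ H.Adj (c i) (c' i)

/-- legality of a robber move -/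
def RobLegal (r r' : V) : Prop := r' = r ∨ H.Adj r r'

/-- the cops, moving first, can guarantee capture within `n` rounds -/
def CopWinN {k : ℕ} : ℕ → (Fin k → V) → V → Prop
  | 0, c, r => ∃ i, c i = r
  | n+1, c, r => (∃ i, c i = r) ∨
      ∃ c', CopsLegal H c c' ∧
        ((∃ i, c' i = r) ∨ ∀ r', RobLegal H r r' → CopWinN n c' r')

lemma copWinN_succ {k : ℕ} : ∀ n (c : Fin k → V) r, CopWinN H n c r → CopWinN H (n+1) c r := by
  intro n
  induction n with
  | zero => intro c r h; exact Or.inl h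
  | succ n ih =>
    rintro c r (h | ⟨c', hc', h⟩)
    · exact Or.inl h
    · exact Or.inr ⟨c', hc', h.imp id (fun hall r' hr' => ih _ _ (hall r' hr'))⟩

lemma copWinN_mono {k : ℕ} {n n' : ℕ} (hn : n ≤ n') {c : Fin k → V} {r : V}
    (h : CopWinN H n c r) : CopWinN H n' c r := by
  induction hn with
  | refl => exact h
  | step _ ih => exact copWinN_succ H _ _ _ ih

/-- the robber survives forever from this configuration (cops to move) -/
def Surv {k : ℕ} (c : Fin k → V) (r : V) : Prop := ∀ n, ¬ CopWinN H n c r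

lemma surv_ne {k : ℕ} {c : Fin k → V} {r : V} (h : Surv H c r) : ∀ i, c i ≠ r := by
  intro i hi; exact h 0 ⟨i, hi⟩

lemma surv_step [Fintype V] {k : ℕ} {c c' : Fin k → V} {r : V}
    (h : Surv H c r) (hc : CopsLegal H c c') :
    (∀ i, c' i ≠ r) ∧ ∃ r', RobLegal H r r' ∧ Surv H c' r' := by
  constructor
  · intro i hi
    exact h 1 (Or.inr ⟨c', hc, Or.inl ⟨i, hi⟩⟩)
  · by_contra hno
    push_neg at hno
    have hall : ∀ r', RobLegal H r r' → ∃ n, CopWinN H n c' r' := by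
      intro r' hr'
      by_contra hn; push_neg at hn
      exact hno r' hr' hn
    set F : V → ℕ := fun r' => if hh : ∃ n, CopWinN H n c' r' then hh.choose else 0 with hF
    have hN : ∀ r', RobLegal H r r' → CopWinN H (Finset.univ.sup F) c' r' := by
      intro r' hr'
      have hex := hall r' hr'
      have h1 : CopWinN H (F r') c' r' := by
        simp only [hF, dif_pos hex]
        exact hex.choose_spec
      exact copWinN_mono H (Finset.le_sup (Finset.mem_univ r')) h1
    exact h (Finset.univ.sup F + 1) (Or.inr ⟨c', hc, Or.inr hN⟩)

/-- a winning cop strategy yields the value statement -/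
lemma value_of_winning [Fintype V] {k : ℕ} (CS : CopStrategy H k) (hW : CS.Winning) :
    ∃ c₀ : Fin k → V, ∀ r, ∃ n, CopWinN H n c₀ r := by
  refine ⟨CS.init, ?_⟩
  by_contra hno
  push_neg at hno
  obtain ⟨r₀, hr₀⟩ := hno
  have hr₀' : Surv H CS.init r₀ := fun n => hr₀ n
  -- escaping robber strategy
  refine absurd (hW ⟨fun _ => r₀,
    fun c r => if hh : ∃ r', RobLegal H r r' ∧ Surv H c r' then hh.choose else r, ?_⟩) ?_
  · intro c r
    by_cases hh : ∃ r', RobLegal H r r' ∧ Surv H c r'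
    · simp only [dif_pos hh]
      exact hh.choose_spec.1
    · exact Or.inl (dif_neg hh)
  · set RS : RobberStrategy H k := ⟨fun _ => r₀,
      fun c r => if hh : ∃ r', RobLegal H r r' ∧ Surv H c r' then hh.choose else r, by
      intro c r
      by_cases hh : ∃ r', RobLegal H r r' ∧ Surv H c r'
      · simp only [dif_pos hh]
        exact hh.choose_spec.1
      · exact Or.inl (dif_neg hh)⟩ with hRS
    push_neg
    intro t
    have hinv : ∀ s, Surv H (gamePlay CS RS s).1 (gamePlay CS RS s).2 := by
      intro s
      induction s with
      | zero => exact hr₀'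
      | succ s ih =>
        have hleg : CopsLegal H (gamePlay CS RS s).1
            (CS.move (gamePlay CS RS s).1 (gamePlay CS RS s).2) := fun i => CS.valid _ _ i
        obtain ⟨-, hex⟩ := surv_step H ih hleg
        have : gamePlay CS RS (s+1) =
            (CS.move (gamePlay CS RS s).1 (gamePlay CS RS s).2,
             RS.move (CS.move (gamePlay CS RS s).1 (gamePlay CS RS s).2)
               (gamePlay CS RS s).2) := rfl
        rw [this]
        simp only [hRS]
        rw [dif_pos hex]
        exact hex.choose_spec.2
    refine ⟨fun i hi => surv_ne H (hinv t) i hi, fun i hi => ?_⟩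
    exact hinv t 1 (Or.inr ⟨CS.move (gamePlay CS RS t).1 (gamePlay CS RS t).2,
      fun j => CS.valid _ _ j, Or.inl ⟨i, hi⟩⟩)

end GenericGame
section GenericGame2

attribute [local instance] Classical.propDecidable

variable {V : Type*} (H : SimpleGraph V)

lemma copWinN_zero_iff {k : ℕ} {c : Fin k → V} {r : V} :
    CopWinN H 0 c r ↔ ∃ i, c i = r := Iff.rfl

lemma copWinN_succ_iff {k : ℕ} {n : ℕ} {c : Fin k → V} {r : V} :
    CopWinN H (n+1) c r ↔ (∃ i, c i = r) ∨
      ∃ c', CopsLegal H c c' ∧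
        ((∃ i, c' i = r) ∨ ∀ r', RobLegal H r r' → CopWinN H n c' r') := Iff.rfl

lemma win_wit {k : ℕ} {c : Fin k → V} {r : V} (hcap : ¬∃ i, c i = r)
    (hw : ∃ n, CopWinN H n c r) :
    ∃ c', CopsLegal H c c' ∧
      ((∃ i, c' i = r) ∨ ∀ r', RobLegal H r r' → CopWinN H (Nat.find hw - 1) c' r') := by
  have hspec := Nat.find_spec hw
  rcases hn : Nat.find hw with _ | n'
  · rw [hn] at hspec; exact absurd hspec hcap
  · rw [hn] at hspec
    rcases hspec with h | ⟨c', hc', h⟩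
    · exact absurd h hcap
    · exact ⟨c', hc', by simpa [hn] using h⟩

noncomputable def valueCS {k : ℕ} (c₀ : Fin k → V) : CopStrategy H k where
  init := c₀
  move c r :=
    if hcap : ∃ i, c i = r then c
    else if hw : ∃ n, CopWinN H n c r then (win_wit H hcap hw).choose
    else c
  valid c r i := by
    by_cases hcap : ∃ i, c i = r
    · simp only [dif_pos hcap]; exact Or.inl trivial
    by_cases hw : ∃ n, CopWinN H n c r
    · simp only [dif_neg hcap, dif_pos hw]
      exact (win_wit H hcap hw).choose_spec.1 i
    · simp only [dif_neg hcap, dif_neg hw]; exact Or.inl trivial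

lemma winning_of_value {k : ℕ} (h : ∃ c₀ : Fin k → V, ∀ r, ∃ n, CopWinN H n c₀ r) :
    ∃ CS : CopStrategy H k, CS.Winning := by
  obtain ⟨c₀, hc₀⟩ := h
  refine ⟨valueCS H c₀, ?_⟩
  intro RS
  by_contra hno
  push_neg at hno
  set CS := valueCS H c₀ with hCS
  obtain ⟨n₀, hn₀⟩ := hc₀ (RS.init c₀)
  have key : ∀ t, ∃ n, CopWinN H n (gamePlay CS RS t).1 (gamePlay CS RS t).2 ∧ n + t ≤ n₀ := by
    intro t
    induction t with
    | zero => exact ⟨n₀, hn₀, le_rfl⟩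
    | succ t ih =>
      obtain ⟨n, hn, hle⟩ := ih
      have hcap : ¬ ∃ i, (gamePlay CS RS t).1 i = (gamePlay CS RS t).2 := by
        rintro ⟨i, hi⟩; exact (hno t).1 i hi
      have hw : ∃ n, CopWinN H n (gamePlay CS RS t).1 (gamePlay CS RS t).2 := ⟨n, hn⟩
      have hmv : CS.move (gamePlay CS RS t).1 (gamePlay CS RS t).2
          = (win_wit H hcap hw).choose := by
        show (valueCS H c₀).move _ _ = _
        simp only [valueCS, dif_neg hcap, dif_pos hw]
      have hplay : gamePlay CS RS (t+1) =
          (CS.move (gamePlay CS RS t).1 (gamePlay CS RS t).2,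
           RS.move (CS.move (gamePlay CS RS t).1 (gamePlay CS RS t).2)
             (gamePlay CS RS t).2) := rfl
      have hfind1 : 1 ≤ Nat.find hw := by
        rcases Nat.eq_zero_or_pos (Nat.find hw) with h0 | h1
        · have := Nat.find_spec hw
          rw [h0] at this
          exact absurd this hcap
        · exact h1
      obtain ⟨hleg, hspec⟩ := (win_wit H hcap hw).choose_spec
      rcases hspec with ⟨i, hpost⟩ | hall
      · exact absurd (by rw [hmv]; exact hpost) ((hno t).2 i)
      · have hrleg : RobLegal H (gamePlay CS RS t).2
            (RS.move (CS.move (gamePlay CS RS t).1 (gamePlay CS RS t).2)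
              (gamePlay CS RS t).2) := RS.valid _ _
        refine ⟨Nat.find hw - 1, ?_, ?_⟩
        · have h1 : (gamePlay CS RS (t+1)).1
              = CS.move (gamePlay CS RS t).1 (gamePlay CS RS t).2 := rfl
          have h2 : (gamePlay CS RS (t+1)).2
              = RS.move (CS.move (gamePlay CS RS t).1 (gamePlay CS RS t).2)
                  (gamePlay CS RS t).2 := rfl
          rw [h1, h2, hmv]
          exact hall _ (RS.valid _ _)
        · have h2 : Nat.find hw ≤ n := Nat.find_le hn
          omega
  obtain ⟨n, hn, hle⟩ := key (n₀ + 1)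
  omega

lemma exists_winning_full [Fintype V] :
    ∃ CS : CopStrategy H (Fintype.card V), CS.Winning := by
  refine ⟨⟨fun i => (Fintype.equivFin V).symm i, fun c _ => c, fun _ _ _ => Or.inl rfl⟩, ?_⟩
  intro RS
  exact ⟨0, Or.inl ⟨_, (Fintype.equivFin V).symm_apply_apply _⟩⟩

end GenericGame2
section Subdivision

set_option linter.unusedSectionVars false

variable {V : Type*} [LinearOrder V] (G : SimpleGraph V) (m : ℕ)

/-- nearest-endpoint projection, `M = (m-1)/2` -/
def nearEnd (M : ℕ) : (V ⊕ (↥G.edgeSet × Fin (m-1))) → V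
  | Sum.inl v => v
  | Sum.inr (e, j) => if (j:ℕ) + 1 ≤ M then Sym2.inf (e : Sym2 V) else Sym2.sup (e : Sym2 V)

/-- potential: distance in the subdivision from `inl z`, computed via `G.dist` -/
noncomputable def Wt (z : V) : (V ⊕ (↥G.edgeSet × Fin (m-1))) → ℕ
  | Sum.inl v => m * G.dist z v
  | Sum.inr (e, j) =>
      min (m * G.dist z (Sym2.inf (e : Sym2 V)) + ((j:ℕ)+1))
          (m * G.dist z (Sym2.sup (e : Sym2 V)) + (m - 1 - (j:ℕ)))

lemma edge_inf_sup_adj (e : ↥G.edgeSet) :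
    G.Adj (Sym2.inf (e : Sym2 V)) (Sym2.sup (e : Sym2 V)) := by
  obtain ⟨e, he⟩ := e
  induction e using Sym2.ind with
  | _ a b =>
    rw [SimpleGraph.mem_edgeSet] at he
    rcases le_total a b with h | h
    · simpa [Sym2.inf_mk, Sym2.sup_mk, inf_eq_left.2 h, sup_eq_right.2 h] using he
    · simpa [Sym2.inf_mk, Sym2.sup_mk, inf_eq_right.2 h, sup_eq_left.2 h] using he.symm

variable {G m}

lemma dist_adj_le (hconn : G.Connected) {a b : V} (hab : G.Adj a b) (z : V) :
    G.dist z b ≤ G.dist z a + 1 := by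
  have h := hconn.dist_triangle (u := z) (v := a) (w := b)
  rwa [SimpleGraph.dist_eq_one_iff_adj.2 hab] at h

lemma mdist_adj_le (hconn : G.Connected) {a b : V} (hab : G.Adj a b) (z : V) :
    m * G.dist z b ≤ m * G.dist z a + m := by
  calc m * G.dist z b ≤ m * (G.dist z a + 1) :=
        Nat.mul_le_mul_left _ (dist_adj_le hconn hab z)
  _ = m * G.dist z a + m := by ring

variable (G m)

/-- the point at distance `p` from `a` on the subdivided edge `ab` -/
def pathPt {a b : V} (hab : G.Adj a b) (p : ℕ) : (V ⊕ (↥G.edgeSet × Fin (m-1))) :=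
  if h0 : p = 0 then Sum.inl a
  else if hm : m ≤ p then Sum.inl b
  else Sum.inr (⟨s(a,b), G.mem_edgeSet.2 hab⟩,
    ⟨if a < b then p - 1 else m - 1 - p, by split <;> omega⟩)

/-- robber's position: on the subdivided edge `ab` at distance `p` from `a` (or at `a` if `a=b`) -/
def ppc (a b : V) (hab : a = b ∨ G.Adj a b) (p : ℕ) : (V ⊕ (↥G.edgeSet × Fin (m-1))) :=
  if h : a = b then Sum.inl a else pathPt G m (hab.resolve_left h) p

variable {G m}

lemma ppc_last (hpos : 0 < m) {a b : V} (hab : a = b ∨ G.Adj a b) :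
    ppc G m a b hab m = Sum.inl b := by
  unfold ppc pathPt
  split
  case isTrue h => rw [h]
  case isFalse h => rw [dif_neg (by omega), dif_pos le_rfl]

lemma Wt_pathPt (hconn : G.Connected) {a b : V} (hab : G.Adj a b) {p : ℕ} (hp : p ≤ m)
    (z : V) :
    Wt G m z (pathPt G m hab p) = min (m * G.dist z a + p) (m * G.dist z b + (m - p)) := by
  have h1' : m * G.dist z b ≤ m * G.dist z a + m := mdist_adj_le hconn hab z
  have h2' : m * G.dist z a ≤ m * G.dist z b + m := mdist_adj_le hconn hab.symm z
  unfold pathPt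
  by_cases h0 : p = 0
  · subst h0
    rw [dif_pos rfl]
    show m * G.dist z a = _
    rw [Nat.sub_zero, Nat.add_zero, min_eq_left (by omega)]
  by_cases hm : m ≤ p
  · have hpm : p = m := le_antisymm hp hm
    rw [dif_neg h0, dif_pos hm]
    show m * G.dist z b = _
    rw [hpm, Nat.sub_self, Nat.add_zero, min_eq_right (by omega)]
  rw [dif_neg h0, dif_neg hm]
  rcases lt_trichotomy a b with hlt | heq | hgt
  · have hinf : Sym2.inf s(a,b) = a := by
      rw [Sym2.inf_mk, inf_eq_left.2 hlt.le]
    have hsup : Sym2.sup s(a,b) = b := by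
      rw [Sym2.sup_mk, sup_eq_right.2 hlt.le]
    simp only [Wt, hinf, hsup, if_pos hlt]
    have e1 : p - 1 + 1 = p := by omega
    have e2 : m - 1 - (p - 1) = m - p := by omega
    rw [e1, e2]
  · exact absurd heq hab.ne
  · have hinf : Sym2.inf s(a,b) = b := by
      rw [Sym2.inf_mk, inf_eq_right.2 hgt.le]
    have hsup : Sym2.sup s(a,b) = a := by
      rw [Sym2.sup_mk, sup_eq_left.2 hgt.le]
    simp only [Wt, hinf, hsup, if_neg (not_lt.2 hgt.le)]
    have e1 : m - 1 - p + 1 = m - p := by omega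
    have e2 : m - 1 - (m - 1 - p) = p := by omega
    rw [e1, e2, min_comm]

lemma Wt_ppc_lower (hconn : G.Connected) {a b z : V} (hab : a = b ∨ G.Adj a b) {p : ℕ}
    (hp : p ≤ m) (ha : 1 ≤ G.dist z a) (hb : 2 ≤ G.dist z b) :
    m + p ≤ Wt G m z (ppc G m a b hab p) := by
  have hBlow : 2 * m ≤ m * G.dist z b := by
    calc 2 * m = m * 2 := by ring
    _ ≤ m * G.dist z b := Nat.mul_le_mul_left _ hb
  have hAlow : m ≤ m * G.dist z a := by
    calc m = m * 1 := by ring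
    _ ≤ m * G.dist z a := Nat.mul_le_mul_left _ ha
  unfold ppc
  split
  case isTrue h =>
    show m + p ≤ m * G.dist z a
    subst h
    omega
  case isFalse h =>
    rw [Wt_pathPt hconn _ hp]
    rcases le_total (m * G.dist z a + p) (m * G.dist z b + (m - p)) with hc | hc
    · rw [min_eq_left hc]; omega
    · rw [min_eq_right hc]; omega

end Subdivision
section Subdivision2

set_option linter.unusedSectionVars false

variable {V : Type*} [LinearOrder V] {G : SimpleGraph V} {m : ℕ}

lemma sinf_lt {a b : V} (h : a < b) : Sym2.inf s(a,b) = a := by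
  rw [Sym2.inf_mk, inf_eq_left.2 h.le]
lemma ssup_lt {a b : V} (h : a < b) : Sym2.sup s(a,b) = b := by
  rw [Sym2.sup_mk, sup_eq_right.2 h.le]
lemma sinf_gt {a b : V} (h : b < a) : Sym2.inf s(a,b) = b := by
  rw [Sym2.inf_mk, inf_eq_right.2 h.le]
lemma ssup_gt {a b : V} (h : b < a) : Sym2.sup s(a,b) = a := by
  rw [Sym2.sup_mk, sup_eq_left.2 h.le]

lemma Wt_lip (hconn : G.Connected) (z : V) {x y : V ⊕ (↥G.edgeSet × Fin (m-1))}
    (hxy : (subdivideEdges G m).Adj x y) : Wt G m z y ≤ Wt G m z x + 1 := by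
  rw [subdivideEdges, SimpleGraph.fromRel_adj] at hxy
  obtain ⟨hne, h⟩ := hxy
  cases x with
  | inl u =>
    cases y with
    | inl v =>
      have hm1 : m = 1 := by rcases h with ⟨h1, _⟩ | ⟨h1, _⟩ <;> exact h1
      have hadj : G.Adj u v := by
        rcases h with ⟨_, h2⟩ | ⟨_, h2⟩
        · exact h2
        · exact h2.symm
      show m * G.dist z v ≤ m * G.dist z u + 1
      rw [hm1, one_mul, one_mul]
      exact dist_adj_le hconn hadj z
    | inr ej =>
      obtain ⟨e, j⟩ := ej
      have hj := j.isLt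
      have hAB := mdist_adj_le (m := m) hconn (edge_inf_sup_adj G e) z
      have hBA := mdist_adj_le (m := m) hconn (edge_inf_sup_adj G e).symm z
      show Wt G m z (Sum.inr (e, j)) ≤ m * G.dist z u + 1
      simp only [Wt]
      set A := m * G.dist z (Sym2.inf (e : Sym2 V)) with hA
      set B := m * G.dist z (Sym2.sup (e : Sym2 V)) with hB
      rcases h with (⟨hj0, hu⟩ | ⟨hj2, hu⟩) | hF
      · rw [hu, ← hA]
        have := min_le_left (A + ((j:ℕ)+1)) (B + (m - 1 - (j:ℕ)))
        omega
      · rw [hu, ← hB]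
        have := min_le_right (A + ((j:ℕ)+1)) (B + (m - 1 - (j:ℕ)))
        omega
      · exact hF.elim
  | inr ej =>
    obtain ⟨e, j⟩ := ej
    have hj := j.isLt
    have hAB := mdist_adj_le (m := m) hconn (edge_inf_sup_adj G e) z
    have hBA := mdist_adj_le (m := m) hconn (edge_inf_sup_adj G e).symm z
    cases y with
    | inl u =>
      show m * G.dist z u ≤ Wt G m z (Sum.inr (e, j)) + 1
      simp only [Wt]
      set A := m * G.dist z (Sym2.inf (e : Sym2 V)) with hA
      set B := m * G.dist z (Sym2.sup (e : Sym2 V)) with hB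
      rcases h with hF | (⟨hj0, hu⟩ | ⟨hj2, hu⟩)
      · exact hF.elim
      · rw [hu, ← hA]
        rcases le_total (A + ((j:ℕ)+1)) (B + (m - 1 - (j:ℕ))) with hc | hc
        · rw [min_eq_left hc]; omega
        · rw [min_eq_right hc]; omega
      · rw [hu, ← hB]
        rcases le_total (A + ((j:ℕ)+1)) (B + (m - 1 - (j:ℕ))) with hc | hc
        · rw [min_eq_left hc]; omega
        · rw [min_eq_right hc]; omega
    | inr ej' =>
      obtain ⟨e', j'⟩ := ej'
      have hj' := j'.isLt
      have hee : e = e' := by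
        rcases h with ⟨h1, _⟩ | ⟨h1, _⟩
        · exact h1
        · exact h1.symm
      subst hee
      have hjj : ((j:ℕ)+1 = (j':ℕ)) ∨ ((j':ℕ)+1 = (j:ℕ)) := by
        rcases h with ⟨_, h2⟩ | ⟨_, h2⟩
        · exact Or.inl h2
        · exact Or.inr h2
      show Wt G m z (Sum.inr (e, j')) ≤ Wt G m z (Sum.inr (e, j)) + 1
      simp only [Wt]
      set A := m * G.dist z (Sym2.inf (e : Sym2 V)) with hA
      set B := m * G.dist z (Sym2.sup (e : Sym2 V)) with hB
      have l1 := min_le_left (A + ((j':ℕ)+1)) (B + (m - 1 - (j':ℕ)))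
      have l2 := min_le_right (A + ((j':ℕ)+1)) (B + (m - 1 - (j':ℕ)))
      rcases le_total (A + ((j:ℕ)+1)) (B + (m - 1 - (j:ℕ))) with hc | hc
      · rw [min_eq_left hc]
        rcases hjj with hjj | hjj
        · omega
        · omega
      · rw [min_eq_right hc]
        rcases hjj with hjj | hjj
        · omega
        · omega

lemma nearEnd_inl {M : ℕ} (v : V) : nearEnd G m M (Sum.inl v) = v := rfl

lemma Wt_nearEnd {M : ℕ} (hm : m = 2*M+1) (y : V ⊕ (↥G.edgeSet × Fin (m-1))) :
    Wt G m (nearEnd G m M y) y ≤ M := by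
  cases y with
  | inl v =>
    show m * G.dist v v ≤ M
    rw [SimpleGraph.dist_self, Nat.mul_zero]
    exact Nat.zero_le M
  | inr ej =>
    obtain ⟨e, j⟩ := ej
    have hj := j.isLt
    show Wt G m (if (j:ℕ) + 1 ≤ M then Sym2.inf (e : Sym2 V) else Sym2.sup (e : Sym2 V))
      (Sum.inr (e, j)) ≤ M
    by_cases hc : (j:ℕ) + 1 ≤ M
    · rw [if_pos hc]
      simp only [Wt]
      rw [SimpleGraph.dist_self, Nat.mul_zero]
      have := min_le_left (0 + ((j:ℕ)+1))
        (m * G.dist (Sym2.inf (e : Sym2 V)) (Sym2.sup (e : Sym2 V)) + (m - 1 - (j:ℕ)))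
      omega
    · rw [if_neg hc]
      simp only [Wt]
      rw [SimpleGraph.dist_self, Nat.mul_zero]
      have := min_le_right
        (m * G.dist (Sym2.sup (e : Sym2 V)) (Sym2.inf (e : Sym2 V)) + ((j:ℕ)+1))
        (0 + (m - 1 - (j:ℕ)))
      omega

lemma Wt_nearEnd_lower (hconn : G.Connected) {M : ℕ} (hm : m = 2*M+1) (z : V)
    (y : V ⊕ (↥G.edgeSet × Fin (m-1))) :
    m * G.dist z (nearEnd G m M y) ≤ Wt G m z y + M := by
  cases y with
  | inl v => show m * G.dist z v ≤ m * G.dist z v + M; omega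
  | inr ej =>
    obtain ⟨e, j⟩ := ej
    have hj := j.isLt
    have hAB := mdist_adj_le (m := m) hconn (edge_inf_sup_adj G e) z
    have hBA := mdist_adj_le (m := m) hconn (edge_inf_sup_adj G e).symm z
    show m * G.dist z (if (j:ℕ) + 1 ≤ M then Sym2.inf (e:Sym2 V) else Sym2.sup (e:Sym2 V))
      ≤ Wt G m z (Sum.inr (e, j)) + M
    simp only [Wt]
    set A := m * G.dist z (Sym2.inf (e : Sym2 V)) with hA
    set B := m * G.dist z (Sym2.sup (e : Sym2 V)) with hB
    by_cases hc : (j:ℕ) + 1 ≤ M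
    · rw [if_pos hc, ← hA]
      rcases le_total (A + ((j:ℕ)+1)) (B + (m - 1 - (j:ℕ))) with hd | hd
      · rw [min_eq_left hd]; omega
      · rw [min_eq_right hd]; omega
    · rw [if_neg hc, ← hB]
      rcases le_total (A + ((j:ℕ)+1)) (B + (m - 1 - (j:ℕ))) with hd | hd
      · rw [min_eq_left hd]; omega
      · rw [min_eq_right hd]; omega

end Subdivision2
section Subdivision3

set_option linter.unusedSectionVars false

variable {V : Type*} [LinearOrder V] {G : SimpleGraph V} {m : ℕ}

lemma pathPt_zero {a b : V} (hab : G.Adj a b) : pathPt G m hab 0 = Sum.inl a := by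
  rw [pathPt, dif_pos rfl]

lemma ppc_self (a : V) (hab : a = a ∨ G.Adj a a) (p : ℕ) :
    ppc G m a a hab p = Sum.inl a := by
  rw [ppc, dif_pos rfl]

lemma ppc_eq_inl {a b : V} (h : a = b) (hab : a = b ∨ G.Adj a b) (p : ℕ) :
    ppc G m a b hab p = Sum.inl a := by
  unfold ppc; rw [dif_pos h]

lemma ppc_of_ne {a b : V} (h : ¬ a = b) (hab : a = b ∨ G.Adj a b) (p : ℕ) :
    ppc G m a b hab p = pathPt G m (hab.resolve_left h) p := by
  rw [ppc, dif_neg h]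

lemma pathPt_adj {a b : V} (hab : G.Adj a b) {p : ℕ} (hp : p + 1 ≤ m) :
    (subdivideEdges G m).Adj (pathPt G m hab p) (pathPt G m hab (p+1)) := by
  rw [subdivideEdges, SimpleGraph.fromRel_adj]
  have hne := hab.ne
  unfold pathPt
  by_cases h0 : p = 0
  · subst h0
    rw [dif_pos rfl]
    by_cases h1 : m ≤ 0 + 1
    · have hm1 : m = 1 := by omega
      rw [dif_neg (by omega : ¬ (0+1 = 0)), dif_pos h1]
      exact ⟨by simp [hne], Or.inl ⟨hm1, hab⟩⟩
    · rw [dif_neg (by omega : ¬ (0+1 = 0)), dif_neg h1]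
      refine ⟨by simp, Or.inl ?_⟩
      by_cases hlt : a < b
      · exact Or.inl ⟨by simp [hlt], (sinf_lt hlt).symm⟩
      · have hgt : b < a := hne.lt_or_gt.resolve_left hlt
        exact Or.inr ⟨by simp [hlt]; omega, (ssup_gt hgt).symm⟩
  · rw [dif_neg h0, dif_neg (by omega : ¬ m ≤ p)]
    by_cases hm : m ≤ p + 1
    · rw [dif_neg (by omega), dif_pos hm]
      refine ⟨by simp, Or.inr ?_⟩
      by_cases hlt : a < b
      · refine Or.inr ⟨by simp [hlt]; omega, (ssup_lt hlt).symm⟩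
      · have hgt : b < a := hne.lt_or_gt.resolve_left hlt
        refine Or.inl ⟨by simp [hlt]; omega, (sinf_gt hgt).symm⟩
    · rw [dif_neg (by omega), dif_neg hm]
      refine ⟨?_, ?_⟩
      · have hvals : (if a < b then p-1 else m-1-p) ≠ (if a < b then p+1-1 else m-1-(p+1)) := by
          by_cases hlt : a < b
          · simp only [if_pos hlt]; omega
          · simp only [if_neg hlt]; omega
        intro hcon
        apply hvals
        have h2 := Sum.inr.inj hcon
        have h3 := congrArg Prod.snd h2
        exact congrArg Fin.val h3
      · by_cases hlt : a < b
        · exact Or.inl ⟨rfl, by simp [hlt]; omega⟩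
        · exact Or.inr ⟨rfl, by simp [hlt]; omega⟩

end Subdivision3
section SubdivGame

attribute [local instance] Classical.propDecidable
set_option linter.unusedSectionVars false

variable {V : Type*} [Fintype V] [LinearOrder V] {G : SimpleGraph V} {m M k : ℕ}

lemma surv_not_adj {σ : Fin k → V} {b : V} (h : Surv G σ b) (i : Fin k) :
    ¬ G.Adj (σ i) b := by
  intro hadj
  apply h 1
  refine Or.inr ⟨Function.update σ i b, ?_, Or.inl ⟨i, Function.update_self i b σ⟩⟩
  intro i'
  by_cases hii : i' = i
  · subst hii
    rw [Function.update_self]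
    exact Or.inr hadj
  · rw [Function.update_of_ne hii]
    exact Or.inl rfl

lemma dist_pos_of_ne (hconn : G.Connected) {x y : V} (h : x ≠ y) : 1 ≤ G.dist x y :=
  Nat.one_le_iff_ne_zero.2 (fun hd => h (hconn.dist_eq_zero_iff.1 hd))

lemma surv_dist2 (hconn : G.Connected) {σ : Fin k → V} {b : V} (h : Surv G σ b) (i : Fin k) :
    2 ≤ G.dist (σ i) b := by
  have h0 : σ i ≠ b := surv_ne G h i
  have h1 : ¬ G.Adj (σ i) b := surv_not_adj h i
  have hne0 : G.dist (σ i) b ≠ 0 := fun hd => h0 (hconn.dist_eq_zero_iff.1 hd)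
  have hne1 : G.dist (σ i) b ≠ 1 := fun hd => h1 (SimpleGraph.dist_eq_one_iff_adj.1 hd)
  omega

lemma legal_of_dist_le_one (hconn : G.Connected) {x y : V} (h : G.dist x y ≤ 1) :
    y = x ∨ G.Adj x y := by
  rcases Nat.lt_or_ge (G.dist x y) 1 with h0 | h1
  · exact Or.inl ((hconn.dist_eq_zero_iff.1 (by omega)).symm)
  · exact Or.inr (SimpleGraph.dist_eq_one_iff_adj.1 (le_antisymm h h1))

/-- the robber's safety invariant on the subdivided graph -/
def GoodState (G : SimpleGraph V) [LinearOrder V] (m M : ℕ) {k : ℕ}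
    (c' : Fin k → (V ⊕ (↥G.edgeSet × Fin (m-1)))) (r' : V ⊕ (↥G.edgeSet × Fin (m-1))) : Prop :=
  ∃ (σ : Fin k → V) (a b : V) (hab : a = b ∨ G.Adj a b) (p : ℕ),
    1 ≤ p ∧ p ≤ m ∧ r' = ppc G m a b hab p ∧ Surv G σ b ∧ (∀ i, σ i ≠ a) ∧
    ∀ i, Wt G m (σ i) (c' i) + 1 ≤ M + p

lemma good_closure (hconn : G.Connected) (hm : m = 2*M+1)
    {c' : Fin k → (V ⊕ (↥G.edgeSet × Fin (m-1)))} {r' : V ⊕ (↥G.edgeSet × Fin (m-1))}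
    (hg : GoodState G m M c' r') :
    (∀ i, c' i ≠ r') ∧
    ∀ c₁', CopsLegal (subdivideEdges G m) c' c₁' →
      (∀ i, c₁' i ≠ r') ∧
        ∃ r₁', RobLegal (subdivideEdges G m) r' r₁' ∧ GoodState G m M c₁' r₁' := by
  obtain ⟨σ, a, b, hab, p, hp1, hpm, hr', hsurv, hane, hW⟩ := hg
  have hdb : ∀ i, 2 ≤ G.dist (σ i) b := fun i => surv_dist2 hconn hsurv i
  have hda : ∀ i, 1 ≤ G.dist (σ i) a := fun i => dist_pos_of_ne hconn (hane i)
  have hWlow : ∀ i, m + p ≤ Wt G m (σ i) r' := by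
    intro i
    rw [hr']
    exact Wt_ppc_lower hconn hab hpm (hda i) (hdb i)
  constructor
  · intro i hi
    have h1 := hW i
    have h2 := hWlow i
    rw [← hi] at h2
    omega
  intro c₁' hleg
  have hW1 : ∀ i, Wt G m (σ i) (c₁' i) ≤ M + p := by
    intro i
    rcases hleg i with he | hadj
    · rw [he]; have := hW i; omega
    · have := Wt_lip hconn (σ i) hadj; have := hW i; omega
  have hnocap : ∀ i, c₁' i ≠ r' := by
    intro i hi
    have h2 := hWlow i
    rw [← hi] at h2
    have := hW1 i
    omega
  refine ⟨hnocap, ?_⟩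
  by_cases hpm' : p < m
  · -- the robber keeps crossing its current edge
    refine ⟨ppc G m a b hab (p+1), ?_, σ, a, b, hab, p+1, by omega, by omega, rfl, hsurv, hane,
      fun i => by have := hW1 i; omega⟩
    rw [hr']
    by_cases hab' : a = b
    · subst hab'
      exact Or.inl (by rw [ppc_self, ppc_self])
    · exact Or.inr (by
        rw [ppc_of_ne hab', ppc_of_ne hab']
        exact pathPt_adj (hab.resolve_left hab') (by omega))
  · -- the robber has arrived: re-anchor the cops and pick a fresh escape move
    have hpm2 : m = p := by omega
    subst hpm2
    have hr'b : r' = Sum.inl b := by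
      rw [hr']
      exact ppc_last (by omega) hab
    have hjump : CopsLegal G σ (fun i => nearEnd G m M (c₁' i)) := by
      intro i
      have h1 : m * G.dist (σ i) (nearEnd G m M (c₁' i)) ≤ Wt G m (σ i) (c₁' i) + M :=
        Wt_nearEnd_lower hconn hm _ _
      have h2 := hW1 i
      have hdle : G.dist (σ i) (nearEnd G m M (c₁' i)) ≤ 1 := by
        by_contra hgt
        push_neg at hgt
        have : m * 2 ≤ m * G.dist (σ i) (nearEnd G m M (c₁' i)) :=
          Nat.mul_le_mul_left _ (by omega)
        omega
      exact legal_of_dist_le_one hconn hdle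
    obtain ⟨hb1, b₁, hb₁leg, hsurv₁⟩ := surv_step G hsurv hjump
    have hbb : b = b₁ ∨ G.Adj b b₁ := by
      rcases hb₁leg with h | h
      · exact Or.inl h.symm
      · exact Or.inr h
    refine ⟨ppc G m b b₁ hbb 1, ?_, (fun i => nearEnd G m M (c₁' i)), b, b₁, hbb, 1,
      le_rfl, by omega, rfl, hsurv₁, hb1, fun i => by
        have := Wt_nearEnd hm (c₁' i)
        show Wt G m (nearEnd G m M (c₁' i)) (c₁' i) + 1 ≤ M + 1
        omega⟩
    rw [hr'b]
    by_cases hbeq : b = b₁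
    · exact Or.inl (ppc_eq_inl hbeq hbb 1)
    · refine Or.inr ?_
      rw [ppc_of_ne hbeq]
      have h := pathPt_adj (m := m) (hbb.resolve_left hbeq) (show 0+1 ≤ m by omega)
      rwa [pathPt_zero] at h

lemma good_not_copwin (hconn : G.Connected) (hm : m = 2*M+1) :
    ∀ n {c' : Fin k → (V ⊕ (↥G.edgeSet × Fin (m-1)))} {r'},
      GoodState G m M c' r' → ¬ CopWinN (subdivideEdges G m) n c' r' := by
  intro n
  induction n with
  | zero =>
    intro c' r' hg hw
    obtain ⟨i, hi⟩ := hw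
    exact (good_closure hconn hm hg).1 i hi
  | succ n ih =>
    intro c' r' hg hw
    rcases hw with ⟨i, hi⟩ | ⟨c₁', hleg, hw⟩
    · exact (good_closure hconn hm hg).1 i hi
    · obtain ⟨hnc, r₁', hrleg, hg₁⟩ := (good_closure hconn hm hg).2 c₁' hleg
      rcases hw with ⟨i, hi⟩ | hall
      · exact hnc i hi
      · exact ih hg₁ (hall r₁' hrleg)

lemma subdiv_escape (hconn : G.Connected) (hm : m = 2*M+1)
    (HS : ∀ σ : Fin k → V, ∃ b, Surv G σ b) :
    ∀ c₀' : Fin k → (V ⊕ (↥G.edgeSet × Fin (m-1))),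
      ∃ r₀', Surv (subdivideEdges G m) c₀' r₀' := by
  intro c₀'
  obtain ⟨b₀, hb₀⟩ := HS (fun i => nearEnd G m M (c₀' i))
  refine ⟨Sum.inl b₀, fun n => good_not_copwin hconn hm n ?_⟩
  refine ⟨fun i => nearEnd G m M (c₀' i), b₀, b₀, Or.inl rfl, m, by omega, le_rfl,
    (ppc_self _ _ _).symm, hb₀, fun i => surv_ne G hb₀ i, ?_⟩
  intro i
  have := Wt_nearEnd hm (c₀' i)
  show Wt G m (nearEnd G m M (c₀' i)) (c₀' i) + 1 ≤ M + m
  omega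

end SubdivGame

/-- If `G'` is obtained from a finite connected simple graph `G` by replacing every edge
by a path of odd length `m`, then `c(G') ≥ c(G)`. -/
theorem copnumber_le_copnumber_subdivideEdges {V : Type*} [Fintype V] [LinearOrder V]
    (G : SimpleGraph V) (hconn : G.Connected) (m : ℕ) (hodd : Odd m) (hpos : 0 < m) :
    copNumber G ≤ copNumber (subdivideEdges G m) := by
  classical
  obtain ⟨M, hM⟩ := hodd
  have hm : m = 2*M+1 := by omega
  have hfin : Finite (V ⊕ (↥G.edgeSet × Fin (m-1))) := by infer_instance
  have hfty : Fintype (V ⊕ (↥G.edgeSet × Fin (m-1))) := Fintype.ofFinite _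
  have hne : {k | ∃ CS : CopStrategy (subdivideEdges G m) k, CS.Winning}.Nonempty :=
    ⟨Fintype.card (V ⊕ (↥G.edgeSet × Fin (m-1))), exists_winning_full (subdivideEdges G m)⟩
  obtain ⟨CS', hCS'⟩ :
      ∃ CS : CopStrategy (subdivideEdges G m) (copNumber (subdivideEdges G m)), CS.Winning :=
    Nat.sInf_mem hne
  obtain ⟨c₀', hval'⟩ := value_of_winning (subdivideEdges G m) CS' hCS'
  have hvalG : ∃ c₀ : Fin (copNumber (subdivideEdges G m)) → V, ∀ r, ∃ n, CopWinN G n c₀ r := by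
    by_contra hno
    push_neg at hno
    have HS : ∀ σ : Fin (copNumber (subdivideEdges G m)) → V, ∃ b, Surv G σ b := by
      intro σ
      obtain ⟨r, hr⟩ := hno σ
      exact ⟨r, fun n => hr n⟩
    obtain ⟨r₀', hr₀'⟩ := subdiv_escape hconn hm HS c₀'
    obtain ⟨n, hn⟩ := hval' r₀'
    exact hr₀' n hn
  obtain ⟨CS, hCS⟩ := winning_of_value G hvalG
  exact Nat.sInf_le ⟨CS, hCS⟩
end

section
/- Every finite simple graph that is outer 1-planar has treewidth at most three. -/
/-- `G` has a tree decomposition of width at most `t`: a finite tree `T` with a bag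
`bag i ⊆ V(G)` for each node `i`, such that every vertex lies in some bag, both
endpoints of every edge lie in some common bag, the nodes whose bag contains a given
vertex induce a connected subtree of `T`, and every bag has size at most `t + 1`. -/
def HasTreeDecompOfWidthLE {V : Type*} (G : SimpleGraph V) (t : ℕ) : Prop :=
  ∃ (ι : Type) (_ : Fintype ι) (T : SimpleGraph ι) (bag : ι → Finset V),
    T.IsTree ∧
    (∀ v : V, ∃ i, v ∈ bag i) ∧
    (∀ u v : V, G.Adj u v → ∃ i, u ∈ bag i ∧ v ∈ bag i) ∧
    (∀ v : V, (T.induce {i | v ∈ bag i}).Connected) ∧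
    (∀ i, (bag i).card ≤ t + 1)

/-!
Cut the circle between positions `n - 1` and `0`, so that the vertices become the points
`0, …, n - 1` of a line and the edges become chords. Call `[i, j]` sealed if no chord leaves it
from a point strictly between `i` and `j`. A sealed interval with an interior point splits into
sealed intervals `[i, c]`, `[c, b]`, `[b, j]` with `i < c ≤ b < j`: let `m < j` be maximal with
`[i, m]` sealed. If `[m, j]` is sealed, take `c = b = m`. Otherwise the chord leaving it goes to
`i`, say `i u`, and since `[i, u]` is not sealed some chord `p w` crosses `i u`. Two crossing
chords of an outer 1-planar drawing are crossed by nothing else, so the intervals they cut out are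
sealed; maximality of `m` then forces `w = j`. Recursing, every split contributes a bag
`{i, c, b, j}` of size at most four.
-/

open Finset

/-- A rooted tree given by parent pointers; `rank` decreases towards the root, which rules out
cycles. -/
structure ParentTree (ι : Type*) where
  root : ι
  parent : ι → ι
  rank : ι → ℕ
  parent_root : parent root = root
  rank_parent_lt : ∀ x, x ≠ root → rank (parent x) < rank x

namespace ParentTree

variable {ι ι' : Type*} (T : ParentTree ι)

def toGraph : SimpleGraph ι := SimpleGraph.fromRel fun x y => T.parent x = y

def tops (S : Set ι) : Set ι := {x | x ∈ S ∧ (x = T.root ∨ T.parent x ∉ S)}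

lemma adj_parent {x : ι} (hx : x ≠ T.root) : T.toGraph.Adj x (T.parent x) :=
  (SimpleGraph.fromRel_adj _ _ _).mpr
    ⟨fun h => (T.rank_parent_lt x hx).ne (congrArg T.rank h).symm, Or.inl rfl⟩

lemma parent_eq_of_adj {x y : ι} (h : T.toGraph.Adj x y) (hxy : T.rank y ≤ T.rank x) :
    T.parent x = y := by
  obtain ⟨hne, hxy' | hyx⟩ := (SimpleGraph.fromRel_adj _ _ _).mp h
  · exact hxy'
  · have hy : y ≠ T.root := by
      rintro rfl
      exact hne (hyx.symm.trans T.parent_root)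
    have := T.rank_parent_lt y hy
    rw [hyx] at this
    omega

lemma exists_reachable_top {S : Set ι} {x : ι} (hx : x ∈ S) :
    ∃ y, ∃ hy : y ∈ T.tops S, (T.toGraph.induce S).Reachable ⟨x, hx⟩ ⟨y, hy.1⟩ := by
  induction hn : T.rank x using Nat.strong_induction_on generalizing x with
  | _ n ih =>
    by_cases htop : x ∈ T.tops S
    · exact ⟨x, htop, .rfl⟩
    have hroot : x ≠ T.root := fun h => htop ⟨hx, Or.inl h⟩
    have hpar : T.parent x ∈ S := by_contra fun h => htop ⟨hx, Or.inr h⟩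
    obtain ⟨y, hy, hreach⟩ := ih _ (hn ▸ T.rank_parent_lt x hroot) hpar rfl
    have hadj : (T.toGraph.induce S).Adj ⟨x, hx⟩ ⟨T.parent x, hpar⟩ := T.adj_parent hroot
    exact ⟨y, hy, hadj.reachable.trans hreach⟩

lemma connected_induce {S : Set ι} (hS : S.Nonempty) (htops : (T.tops S).Subsingleton) :
    (T.toGraph.induce S).Connected := by
  have := hS.to_subtype
  refine (SimpleGraph.connected_iff _).mpr ⟨fun ⟨x, hx⟩ ⟨x', hx'⟩ => ?_, inferInstance⟩
  obtain ⟨y, hy, hxy⟩ := T.exists_reachable_top hx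
  obtain ⟨y', hy', hxy'⟩ := T.exists_reachable_top hx'
  obtain rfl := htops hy hy'
  exact hxy.trans hxy'.symm

lemma connected : T.toGraph.Connected := by
  have htops : (T.tops Set.univ).Subsingleton := fun x hx y hy => by
    rw [hx.2.resolve_right (· trivial), hy.2.resolve_right (· trivial)]
  exact T.toGraph.induceUnivIso.connected_iff.mp (T.connected_induce ⟨T.root, trivial⟩ htops)

/-- On a cycle, both neighbours of a vertex of maximal rank would be its parent. -/
lemma isAcyclic : T.toGraph.IsAcyclic := by
  classical
  intro v c hc
  obtain ⟨x, hx, hmax⟩ := c.support.toFinset.exists_max_image T.rank ⟨v, by simp⟩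
  rw [List.mem_toFinset] at hx
  have hc' := hc.rotate hx
  have hle : ∀ y ∈ (c.rotate x hx).support, T.rank y ≤ T.rank x := fun y hy =>
    hmax y (List.mem_toFinset.mpr ((c.mem_support_rotate_iff x hx).mp hy))
  have hnil := hc'.not_nil
  have hsnd := T.parent_eq_of_adj ((c.rotate x hx).adj_snd hnil)
    (hle _ ((c.rotate x hx).getVert_mem_support 1))
  have hpen := T.parent_eq_of_adj ((c.rotate x hx).adj_penultimate hnil).symm
    (hle _ ((c.rotate x hx).getVert_mem_support _))
  exact hc'.snd_ne_penultimate (hsnd.symm.trans hpen)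

lemma isTree : T.toGraph.IsTree := ⟨T.connected, T.isAcyclic⟩

def unit : ParentTree Unit where
  root := ()
  parent := id
  rank _ := 0
  parent_root := rfl
  rank_parent_lt _ hx := absurd rfl hx

variable (T' : ParentTree ι')

open Classical in
/-- `T'` hung below the root of `T`. -/
noncomputable def attach : ParentTree (ι ⊕ ι') where
  root := .inl T.root
  parent := Sum.elim (fun x => .inl (T.parent x))
    fun y => if y = T'.root then .inl T.root else .inr (T'.parent y)
  rank := Sum.elim T.rank (fun y => T'.rank y + T.rank T.root + 1)
  parent_root := congrArg Sum.inl T.parent_root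
  rank_parent_lt := by
    rintro (x | y) hne
    · exact T.rank_parent_lt x (fun h => hne (congrArg Sum.inl h))
    · by_cases hy : y = T'.root
      · simp [hy]
      · simpa [hy] using T'.rank_parent_lt y hy

variable {T T'} {S : Set (ι ⊕ ι')}

lemma inl_mem_tops_attach {x : ι} :
    Sum.inl x ∈ (T.attach T').tops S ↔ x ∈ T.tops (Sum.inl ⁻¹' S) := by
  simp [tops, attach, and_or_left]

lemma mem_tops_of_inr_mem_tops_attach {y : ι'} (hy : Sum.inr y ∈ (T.attach T').tops S) :
    y ∈ T'.tops (Sum.inr ⁻¹' S) ∧ (y = T'.root → Sum.inl T.root ∉ S) := by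
  by_cases hroot : y = T'.root <;> simp_all [tops, attach]

end ParentTree

/-- A tree decomposition of `G.induce X` of width at most `k` on a rooted tree; the connectivity
axiom is phrased as: the nodes whose bag contains `v` have at most one top. -/
structure RootedTreeDecomp {V : Type*} (G : SimpleGraph V) (X : Set V) (k : ℕ) where
  ι : Type
  [fintype : Fintype ι]
  tree : ParentTree ι
  bag : ι → Finset V
  bag_subset : ∀ x, ↑(bag x) ⊆ X
  card_bag_le : ∀ x, #(bag x) ≤ k + 1
  exists_mem_bag : ∀ v ∈ X, ∃ x, v ∈ bag x
  exists_adj_mem_bag : ∀ u ∈ X, ∀ v ∈ X, G.Adj u v → ∃ x, u ∈ bag x ∧ v ∈ bag x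
  tops_subsingleton : ∀ v, (tree.tops {x | v ∈ bag x}).Subsingleton

namespace RootedTreeDecomp

attribute [instance] fintype

variable {V W : Type*} {G : SimpleGraph V} {X X' : Set V} {k : ℕ}

def rootBag (R : RootedTreeDecomp G X k) : Finset V := R.bag R.tree.root

def single (B : Finset V) (hB : #B ≤ k + 1) : RootedTreeDecomp G ↑B k where
  ι := Unit
  tree := .unit
  bag _ := B
  bag_subset _ := subset_rfl
  card_bag_le _ := hB
  exists_mem_bag _ hv := ⟨(), hv⟩
  exists_adj_mem_bag _ hu _ hv _ := ⟨(), hu, hv⟩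
  tops_subsingleton _ := Set.subsingleton_of_subsingleton

noncomputable def attach (R : RootedTreeDecomp G X k) (R' : RootedTreeDecomp G X' k)
    (hroot : X ∩ X' ⊆ ↑R.rootBag ∩ ↑R'.rootBag)
    (hadj : ∀ u ∈ X, ∀ v ∈ X', G.Adj u v → u ∈ X' ∨ v ∈ X) :
    RootedTreeDecomp G (X ∪ X') k where
  ι := R.ι ⊕ R'.ι
  tree := R.tree.attach R'.tree
  bag := Sum.elim R.bag R'.bag
  bag_subset := by
    rintro (x | y)
    · exact (R.bag_subset x).trans Set.subset_union_left
    · exact (R'.bag_subset y).trans Set.subset_union_right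
  card_bag_le := by
    rintro (x | y)
    · exact R.card_bag_le x
    · exact R'.card_bag_le y
  exists_mem_bag := by
    rintro v (hv | hv)
    · obtain ⟨x, hx⟩ := R.exists_mem_bag v hv
      exact ⟨.inl x, hx⟩
    · obtain ⟨y, hy⟩ := R'.exists_mem_bag v hv
      exact ⟨.inr y, hy⟩
  exists_adj_mem_bag u hu v hv huv := by
    obtain ⟨hu, hv⟩ | ⟨hu, hv⟩ : u ∈ X ∧ v ∈ X ∨ u ∈ X' ∧ v ∈ X' := by
      rcases hu with hu | hu <;> rcases hv with hv | hv
      · exact .inl ⟨hu, hv⟩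
      · exact (hadj u hu v hv huv).elim (fun hu' => .inr ⟨hu', hv⟩)
          (fun hv' => .inl ⟨hu, hv'⟩)
      · exact (hadj v hv u hu huv.symm).elim (fun hv' => .inr ⟨hu, hv'⟩)
          (fun hu' => .inl ⟨hu', hv⟩)
      · exact .inr ⟨hu, hv⟩
    · obtain ⟨x, hx⟩ := R.exists_adj_mem_bag u hu v hv huv
      exact ⟨.inl x, hx⟩
    · obtain ⟨y, hy⟩ := R'.exists_adj_mem_bag u hu v hv huv
      exact ⟨.inr y, hy⟩
  tops_subsingleton v := by
    have top_inr : ∀ y,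
        Sum.inr y ∈ (R.tree.attach R'.tree).tops {z | v ∈ Sum.elim R.bag R'.bag z} →
          y ∈ R'.tree.tops {y | v ∈ R'.bag y} ∧ v ∉ X := fun y hy => by
      obtain ⟨hy', hyroot⟩ := ParentTree.mem_tops_of_inr_mem_tops_attach hy
      refine ⟨hy', fun hvX => ?_⟩
      obtain ⟨hvR, hvR'⟩ := hroot ⟨hvX, R'.bag_subset y hy'.1⟩
      exact hyroot (R'.tops_subsingleton v hy' ⟨hvR', Or.inl rfl⟩) hvR
    rintro (x | y) hx (x' | y') hx'
    · rw [ParentTree.inl_mem_tops_attach] at hx hx'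
      rw [R.tops_subsingleton v hx hx']
    · exact ((top_inr y' hx').2 (R.bag_subset x (ParentTree.inl_mem_tops_attach.mp hx).1)).elim
    · exact ((top_inr y hx).2 (R.bag_subset x' (ParentTree.inl_mem_tops_attach.mp hx').1)).elim
    · rw [R'.tops_subsingleton v (top_inr y hx).1 (top_inr y' hx').1]

noncomputable def comap {H : SimpleGraph W} {Y : Set W} (φ : G ↪g H)
    (R : RootedTreeDecomp H Y k) :
    RootedTreeDecomp G (φ ⁻¹' Y) k where
  ι := R.ι
  tree := R.tree
  bag x := (R.bag x).preimage φ φ.injective.injOn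
  bag_subset x v hv := R.bag_subset x (mem_preimage.mp hv)
  card_bag_le x := (card_le_card_of_injOn φ (fun _ ha => mem_preimage.mp ha)
    φ.injective.injOn).trans (R.card_bag_le x)
  exists_mem_bag v hv := by simpa using R.exists_mem_bag (φ v) hv
  exists_adj_mem_bag u hu v hv huv := by
    simpa using R.exists_adj_mem_bag (φ u) hu (φ v) hv (φ.map_adj_iff.mpr huv)
  tops_subsingleton v := by simpa using R.tops_subsingleton (φ v)

theorem hasTreeDecompOfWidthLE (R : RootedTreeDecomp G X k) (hX : ∀ v, v ∈ X) :
    HasTreeDecompOfWidthLE G k :=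
  ⟨R.ι, R.fintype, R.tree.toGraph, R.bag, R.tree.isTree, fun v => R.exists_mem_bag v (hX v),
    fun u v huv => R.exists_adj_mem_bag u (hX u) v (hX v) huv,
    fun v => R.tree.connected_induce (R.exists_mem_bag v (hX v)) (R.tops_subsingleton v),
    R.card_bag_le⟩

end RootedTreeDecomp

def ChordsCross (a b c d : ℕ) : Prop :=
  c ≠ a ∧ c ≠ b ∧ d ≠ a ∧ d ≠ b ∧
    Xor (min a b < c ∧ c < max a b) (min a b < d ∧ d < max a b)

def AtMostOneCrossing (H : SimpleGraph ℕ) : Prop :=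
  ∀ ⦃a b c d c' d' : ℕ⦄, H.Adj a b → H.Adj c d → H.Adj c' d' →
    ChordsCross a b c d → ChordsCross a b c' d' → s(c, d) = s(c', d')

def Sealed (H : SimpleGraph ℕ) (i j : ℕ) : Prop :=
  ∀ ⦃p q : ℕ⦄, H.Adj p q → i < p → p < j → i ≤ q ∧ q ≤ j

section Sealed

variable {H : SimpleGraph ℕ}

lemma sealed_of_le_succ {i j : ℕ} (h : j ≤ i + 1) : Sealed H i j :=
  fun _ _ _ hi hj => by omega

lemma Sealed.mem_or_mem_of_adj {a b : ℕ} (hs : Sealed H a b) {X : Set ℕ} (ha : a ∈ X)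
    (hb : b ∈ X) :
    ∀ u ∈ X, ∀ v ∈ Set.Icc a b, H.Adj u v → u ∈ Set.Icc a b ∨ v ∈ X := by
  rintro u - v ⟨hav, hvb⟩ huv
  rcases hav.eq_or_lt with rfl | hav
  · exact .inr ha
  rcases hvb.eq_or_lt with rfl | hvb
  · exact .inr hb
  exact .inl (hs huv.symm hav hvb)

/-- Two crossing chords `a b` and `c d` are crossed by nothing else, so no chord leaves the
intervals they cut out. -/
lemma AtMostOneCrossing.sealed_of_crossing (hH : AtMostOneCrossing H) {a b c d : ℕ}
    (hac : a < c) (hcb : c < b) (hbd : b < d) (hab : H.Adj a b) (hcd : H.Adj c d) :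
    Sealed H a c ∧ Sealed H c b ∧ Sealed H b d ∧ Sealed H a d := by
  have key : ∀ ⦃s t⦄, H.Adj s t →
      (ChordsCross a b s t → s(c, d) = s(s, t)) ∧ (ChordsCross c d s t → s(a, b) = s(s, t)) :=
    fun s t hst => ⟨hH hab hcd hst (by unfold ChordsCross Xor; omega),
      hH hcd hab hst (by unfold ChordsCross Xor; omega)⟩
  refine ⟨?_, ?_, ?_, ?_⟩ <;>
  · intro s t hst hs ht
    have := key hst
    simp only [ChordsCross, Xor, Sym2.eq_iff] at this
    omega

lemma AtMostOneCrossing.exists_split (hH : AtMostOneCrossing H) {i j : ℕ} (hs : Sealed H i j)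
    (hij : i + 1 < j) :
    ∃ c b, i < c ∧ c ≤ b ∧ b < j ∧ Sealed H i c ∧ Sealed H c b ∧ Sealed H b j := by
  classical
  let P x := i < x ∧ Sealed H i x
  have hP : P (i + 1) := ⟨by omega, sealed_of_le_succ le_rfl⟩
  obtain ⟨him, hm⟩ : P (Nat.findGreatest P (j - 1)) := Nat.findGreatest_spec (by omega) hP
  set m := Nat.findGreatest P (j - 1)
  have hmj : m < j := by have := Nat.findGreatest_le (P := P) (j - 1); omega
  have hmax : ∀ x, m < x → x < j → ¬Sealed H i x := fun x hmx hxj hx =>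
    Nat.findGreatest_is_greatest hmx (by omega) ⟨by omega, hx⟩
  by_cases hmj' : Sealed H m j
  · exact ⟨m, m, him, le_rfl, hmj, hm, sealed_of_le_succ (by omega), hmj'⟩
  -- the chord leaving `[m, j]` cannot end in `(i, m)`, since `[i, m]` is sealed
  obtain ⟨u, hmu, huj, hiu⟩ : ∃ u, m < u ∧ u < j ∧ H.Adj i u := by
    unfold Sealed at hmj'
    push Not at hmj'
    obtain ⟨u, q, huq, hmu, huj, hq⟩ := hmj'
    have := hs huq (by omega) huj
    obtain rfl : q = i := by
      by_contra hqi
      have := hm huq.symm (by omega) (by omega)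
      omega
    exact ⟨u, hmu, huj, huq.symm⟩
  obtain ⟨p, w, hpw, hip, hpu, huw, hwj⟩ :
      ∃ p w, H.Adj p w ∧ i < p ∧ p < u ∧ u < w ∧ w ≤ j := by
    have := hmax u hmu huj
    unfold Sealed at this
    push Not at this
    obtain ⟨p, w, hpw, hip, hpu, hw⟩ := this
    have := hs hpw hip (by omega)
    exact ⟨p, w, hpw, hip, hpu, by omega, by omega⟩
  obtain ⟨s₁, s₂, s₃, s₄⟩ := hH.sealed_of_crossing hip hpu huw hiu hpw
  obtain rfl : w = j := by
    by_contra hwj'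
    exact hmax w (by omega) (by omega) s₄
  exact ⟨p, u, hip, hpu.le, huj, s₁, s₂, s₃⟩

noncomputable def RootedTreeDecomp.attachSealed {X : Set ℕ} {k a b : ℕ}
    (R : RootedTreeDecomp H X k) (R' : RootedTreeDecomp H (Set.Icc a b) k) (hs : Sealed H a b)
    (hR : {a, b} ⊆ R.rootBag) (hR' : {a, b} ⊆ R'.rootBag)
    (hX : X ∩ Set.Icc a b ⊆ ↑({a, b} : Finset ℕ)) :
    RootedTreeDecomp H (X ∪ Set.Icc a b) k :=
  R.attach R' (fun _ hv => ⟨hR (hX hv), hR' (hX hv)⟩)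
    (hs.mem_or_mem_of_adj (R.bag_subset _ (hR (by simp))) (R.bag_subset _ (hR (by simp))))

theorem AtMostOneCrossing.exists_rootedTreeDecomp (hH : AtMostOneCrossing H) {i j : ℕ}
    (hij : i ≤ j) (hs : Sealed H i j) :
    ∃ R : RootedTreeDecomp H (Set.Icc i j) 3, {i, j} ⊆ R.rootBag := by
  induction hn : j - i using Nat.strong_induction_on generalizing i j with
  | _ n ih =>
  rcases Nat.lt_or_ge (i + 1) j with hlt | hle
  · obtain ⟨c, b, hic, hcb, hbj, s₁, s₂, s₃⟩ := hH.exists_split hs hlt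
    obtain ⟨R₁, h₁⟩ := ih (c - i) (by omega) hic.le s₁ rfl
    obtain ⟨R₂, h₂⟩ := ih (b - c) (by omega) hcb s₂ rfl
    obtain ⟨R₃, h₃⟩ := ih (j - b) (by omega) hbj.le s₃ rfl
    have hX : Set.Icc i j =
        ↑({i, c, b, j} : Finset ℕ) ∪ Set.Icc i c ∪ Set.Icc c b ∪ Set.Icc b j := by
      ext v
      simp only [coe_insert, coe_singleton, Set.mem_union, Set.mem_insert_iff,
        Set.mem_singleton_iff, Set.mem_Icc]
      omega
    rw [hX]
    refine ⟨(((RootedTreeDecomp.single {i, c, b, j} card_le_four).attachSealed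
      R₁ s₁ ?_ h₁ ?_).attachSealed R₂ s₂ ?_ h₂ ?_).attachSealed R₃ s₃ ?_ h₃ ?_, ?_⟩
    all_goals first
      | change _ ⊆ ({i, c, b, j} : Finset ℕ)
        simp [insert_subset_iff]
      | intro v hv
        simp only [coe_insert, coe_singleton, Set.mem_inter_iff, Set.mem_union, Set.mem_insert_iff,
          Set.mem_singleton_iff, Set.mem_Icc] at hv ⊢
        omega
  · have hX : Set.Icc i j = ↑({i, j} : Finset ℕ) := by
      ext v
      simp only [coe_insert, coe_singleton, Set.mem_insert_iff, Set.mem_singleton_iff, Set.mem_Icc]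
      omega
    rw [hX]
    exact ⟨.single {i, j} (card_le_two.trans (by norm_num)), subset_rfl⟩

end Sealed

namespace ZMod

def valEmbedding (n : ℕ) [NeZero n] : ZMod n ↪ ℕ := ⟨val, val_injective n⟩

variable {n : ℕ} [NeZero n]

lemma val_add_val_sub (x a : ZMod n) :
    a.val + (x - a).val = x.val ∨ a.val + (x - a).val = x.val + n := by
  have hx : a + (x - a) = x := add_sub_cancel a x
  rcases lt_or_ge (a.val + (x - a).val) n with h | h
  · have := val_add_of_lt h
    rw [hx] at this
    exact .inl this.symm
  · have := val_add_of_le h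
    rw [hx] at this
    have := val_lt (x - a)
    omega

lemma mem_arcBetween_iff {a b x : ZMod n} :
    x ∈ arcBetween a b ↔
      a.val < x.val ∧ x.val < b.val ∨ b.val < a.val ∧ (x.val < b.val ∨ a.val < x.val) := by
  have := val_add_val_sub x a
  have := val_add_val_sub b a
  have := val_lt x
  have := val_lt a
  have := val_lt b
  have := val_lt (x - a)
  have := val_lt (b - a)
  simp only [arcBetween, Set.mem_ofPred_eq]
  omega

lemma edgesCross_of_chordsCross {a b c d : ZMod n} (h : ChordsCross a.val b.val c.val d.val) :
    EdgesCross a b c d := by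
  unfold ChordsCross Xor at h
  simp only [EdgesCross, ← (val_injective n).ne_iff]
  refine ⟨by omega, by omega, by omega, by omega, by omega, by omega, ?_⟩
  show Xor _ _ ∨ Xor _ _
  simp only [xor_def, mem_arcBetween_iff]
  omega

end ZMod

lemma OuterKPlanarDrawing.atMostOneCrossing {n : ℕ} [NeZero n] {G : SimpleGraph (ZMod n)}
    (hG : OuterKPlanarDrawing G 1) : AtMostOneCrossing (G.map (ZMod.valEmbedding n)) := by
  intro _ _ _ _ _ _ hab₀ hcd₀ hcd'₀ h h'
  obtain ⟨a, b, hab, rfl, rfl⟩ := (SimpleGraph.map_adj _ _ _ _).mp hab₀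
  obtain ⟨c, d, hcd, rfl, rfl⟩ := (SimpleGraph.map_adj _ _ _ _).mp hcd₀
  obtain ⟨c', d', hcd', rfl, rfl⟩ := (SimpleGraph.map_adj _ _ _ _).mp hcd'₀
  have := (Set.ncard_le_one).mp (hG _ hab) _
    ⟨hcd, a, b, c, d, rfl, rfl, ZMod.edgesCross_of_chordsCross h⟩ _
    ⟨hcd', a, b, c', d', rfl, rfl, ZMod.edgesCross_of_chordsCross h'⟩
  simpa using this

/-- Every finite simple graph that is outer 1-planar has treewidth at most three. -/
theorem outer_one_planar_treewidth_le_three {V : Type*} [Fintype V]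
    (G : SimpleGraph V) (h1p : OuterKPlanar G 1) :
    HasTreeDecompOfWidthLE G 3 := by
  obtain ⟨f, hf⟩ := h1p
  have : NeZero (Fintype.card V) := ⟨fun h => (Fintype.card_eq_zero_iff.mp h).false (f.symm 0)⟩
  let φ := (SimpleGraph.Embedding.map (ZMod.valEmbedding (Fintype.card V)) _).comp
    (SimpleGraph.Embedding.map f.toEmbedding G)
  have hsealed : Sealed ((G.map f.toEmbedding).map (ZMod.valEmbedding (Fintype.card V)))
      0 (Fintype.card V - 1) := by
    intro _ _ hpq _ _
    obtain ⟨-, y, -, -, rfl⟩ := (SimpleGraph.map_adj _ _ _ _).mp hpq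
    exact ⟨Nat.zero_le _, Nat.le_sub_one_of_lt (ZMod.val_lt y)⟩
  obtain ⟨R, -⟩ := hf.atMostOneCrossing.exists_rootedTreeDecomp (Nat.zero_le _) hsealed
  exact (R.comap φ).hasTreeDecompOfWidthLE fun v =>
    ⟨Nat.zero_le _, Nat.le_sub_one_of_lt (ZMod.val_lt (f v))⟩
end
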